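/- arXiv:0912.1904 — 9 statements merged into one kernel-verified Lean document; each statement's English description precedes it below -/
import Mathlib

section
/- Let ν ≥ 2 be an integer and let z : (−∞, 0] → ℝ be continuous with z(0) = 1 and 1 = z(s) − c_ν · s · z(s)^ν for all s ≤ 0. Then 0 < z(s) ≤ 1 for all s ≤ 0, z is strictly monotone increasing on (−∞, 0], and z(s) → 0 as s → −∞. -/
/-!
The relation says that `s = (z(s) - 1) / (c z(s)^ν)` wherever `z(s) ≠ 0`, and `z(s)` can never
vanish since `0 ≠ 1`. By continuity and `z(0) = 1`, `z` stays positive on `(-∞, 0]`, and then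
`1 - z(s) = c (-s) z(s)^ν ≥ 0` gives `z(s) ≤ 1`. On `(0, 1]` the map `x ↦ (x - 1) / (c x^ν)`
is monotone and it is a left inverse of `z`, so `z` is strictly increasing. Finally
`z(s)^ν ≤ 1 / (c (-s)) → 0`, hence `z(s) → 0`.
-/

open Set Filter Topology

theorem StrictMonoOn.of_leftInvOn_monotoneOn {α β : Type*} [Preorder α] [LinearOrder β]
    {f : α → β} {g : β → α} {s : Set α} {t : Set β}
    (hg : MonotoneOn g t) (hf : MapsTo f s t) (hgf : LeftInvOn g f s) : StrictMonoOn f s := by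
  intro a ha b hb hab
  by_contra! hba
  have : b ≤ a := by
    simpa only [hgf ha, hgf hb] using hg (hf hb) (hf ha) hba
  exact hab.not_ge this

theorem Filter.Tendsto.of_pow_tendsto_zero {α : Type*} {l : Filter α} {f : α → ℝ} {n : ℕ}
    (hn : n ≠ 0) (hf : ∀ᶠ a in l, 0 ≤ f a) (h : Tendsto (fun a => f a ^ n) l (𝓝 0)) :
    Tendsto f l (𝓝 0) := by
  refine (h.rpow_const_nhds_zero (p := (n : ℝ)⁻¹) (by positivity)).congr' ?_
  filter_upwards [hf] with a ha using Real.pow_rpow_inv_natCast ha hn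

theorem monotoneOn_sub_one_div_mul_pow {c : ℝ} (hc : 0 < c) (ν : ℕ) :
    MonotoneOn (fun x : ℝ => (x - 1) / (c * x ^ ν)) (Ioc 0 1) := by
  rintro x ⟨hx0, -⟩ y ⟨hy0, hy1⟩ hxy
  have hxν : 0 < c * x ^ ν := by positivity
  calc (x - 1) / (c * x ^ ν) ≤ (y - 1) / (c * x ^ ν) := by gcongr
    _ ≤ (y - 1) / (c * y ^ ν) := by
      rw [div_le_div_iff₀ hxν (by positivity)]
      exact mul_le_mul_of_nonpos_left (by gcongr) (by linarith)

section Relation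

variable {c s x : ℝ} {ν : ℕ}

theorem ne_zero_of_one_eq_sub_mul_pow (hν : ν ≠ 0) (h : 1 = x - c * s * x ^ ν) : x ≠ 0 := by
  rintro rfl
  simp [zero_pow hν] at h

theorem le_one_of_one_eq_sub_mul_pow (hc : 0 ≤ c) (hs : s ≤ 0) (hx : 0 ≤ x)
    (h : 1 = x - c * s * x ^ ν) : x ≤ 1 := by
  have : c * s * x ^ ν ≤ 0 :=
    mul_nonpos_of_nonpos_of_nonneg (mul_nonpos_of_nonneg_of_nonpos hc hs) (by positivity)
  linarith

theorem eq_sub_one_div_of_one_eq_sub_mul_pow (hc : c ≠ 0) (hx : x ≠ 0)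
    (h : 1 = x - c * s * x ^ ν) : s = (x - 1) / (c * x ^ ν) := by
  rw [eq_div_iff (by positivity)]
  linarith

theorem pow_le_one_div_of_one_eq_sub_mul_pow (hc : 0 < c) (hs : s < 0) (hx : 0 ≤ x)
    (h : 1 = x - c * s * x ^ ν) : x ^ ν ≤ 1 / (c * -s) := by
  rw [le_div_iff₀ (by nlinarith)]
  nlinarith

theorem tendsto_atBot_zero_of_one_eq_sub_mul_pow {z : ℝ → ℝ} (hc : 0 < c) (hν : ν ≠ 0)
    (hz : ∀ s < 0, 0 ≤ z s) (hrel : ∀ s < 0, 1 = z s - c * s * z s ^ ν) :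
    Tendsto z atBot (𝓝 0) := by
  have hneg : ∀ᶠ s in atBot, s < (0 : ℝ) := eventually_lt_atBot 0
  refine Tendsto.of_pow_tendsto_zero hν (hneg.mono hz) ?_
  have hbound : Tendsto (fun s : ℝ => 1 / (c * -s)) atBot (𝓝 0) :=
    tendsto_const_nhds.div_atTop (tendsto_neg_atBot_atTop.const_mul_atTop hc)
  refine tendsto_of_tendsto_of_tendsto_of_le_of_le' tendsto_const_nhds hbound
    (hneg.mono fun s hs => pow_nonneg (hz s hs) ν) ?_
  filter_upwards [hneg] with s hs
  exact pow_le_one_div_of_one_eq_sub_mul_pow hc hs (hz s hs) (hrel s hs)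

end Relation

/-- Let `ν ≥ 2` and let `z : (−∞, 0] → ℝ` be continuous with
`z(0) = 1` and `1 = z(s) − c_ν s z(s)^ν` for all `s ≤ 0`.  Then `0 < z(s) ≤ 1`
for all `s ≤ 0`, `z` is strictly monotone increasing on `(−∞, 0]`, and
`z(s) → 0` as `s → −∞`. -/
theorem catalan_branch_behavior_on_negative_axis
    (ν : ℕ) (hν : 2 ≤ ν)
    (c : ℝ) (hc : c = 2 * ν * (Nat.choose (2 * ν - 1) (ν - 1)))
    (z : ℝ → ℝ) (hcont : ContinuousOn z (Set.Iic 0)) (hz0 : z 0 = 1)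
    (hrel : ∀ s ≤ (0 : ℝ), 1 = z s - c * s * z s ^ ν) :
    (∀ s ≤ (0 : ℝ), 0 < z s ∧ z s ≤ 1) ∧
      StrictMonoOn z (Set.Iic 0) ∧
      Filter.Tendsto z Filter.atBot (nhds 0) := by
  have hν0 : ν ≠ 0 := by omega
  have hc0 : 0 < c := by
    have : 0 < Nat.choose (2 * ν - 1) (ν - 1) := Nat.choose_pos (by omega)
    rw [hc]; positivity
  have hpos : ∀ s ≤ (0 : ℝ), 0 < z s := fun s hs =>
    isPreconnected_Iic.lt_of_ne hcont
      (fun t ht => ne_zero_of_one_eq_sub_mul_pow hν0 (hrel t ht))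
      ⟨0, self_mem_Iic, by simp [hz0]⟩ (mem_Iic.mpr hs)
  have hle : ∀ s ≤ (0 : ℝ), z s ≤ 1 := fun s hs =>
    le_one_of_one_eq_sub_mul_pow hc0.le hs (hpos s hs).le (hrel s hs)
  refine ⟨fun s hs => ⟨hpos s hs, hle s hs⟩, ?_, ?_⟩
  · exact StrictMonoOn.of_leftInvOn_monotoneOn (monotoneOn_sub_one_div_mul_pow hc0 ν)
      (fun s hs => ⟨hpos s hs, hle s hs⟩)
      (fun s hs => (eq_sub_one_div_of_one_eq_sub_mul_pow hc0.ne' (hpos s hs).ne' (hrel s hs)).symm)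
  · exact tendsto_atBot_zero_of_one_eq_sub_mul_pow hc0 hν0 (fun s hs => (hpos s hs.le).le)
      (fun s hs => hrel s hs.le)
end

section
/- For every integer ν ≥ 2, the real power series Σ_{j≥0} c_ν^j ζ_j s^j (the generating function z_0 of the generalized Catalan numbers) has radius of convergence exactly s_c = (ν−1)^{ν−1}/(c_ν · ν^ν). -/
open Filter Finset Topology
open scoped Nat

/-!
Ratio test. Comparing factorials, `ζ_{j+1} / ζ_j` is a product of ratios of affine functions
of `j`, whose limit is `ν^ν / (ν-1)^(ν-1)`; the coefficient ratio therefore tends to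
`c_ν ν^ν / (ν-1)^(ν-1) = 1 / s_c`.
-/

theorem Nat.choose_succ_mul_succ_mul_ascFactorial (m n : ℕ) :
    ((m + 1) * (n + 1)).choose (n + 1) * ((n + 1) * (m * n + 1).ascFactorial m) =
      ((m + 1) * n).choose n * ((m + 1) * n + 1).ascFactorial (m + 1) := by
  apply Nat.eq_of_mul_eq_mul_right (Nat.mul_pos n.factorial_pos (m * n).factorial_pos)
  calc ((m + 1) * (n + 1)).choose (n + 1) * ((n + 1) * (m * n + 1).ascFactorial m) *
        (n ! * (m * n)!)
      = (m * n + m + (n + 1)).choose (n + 1) * (m * n + m)! * (n + 1)! := by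
        rw [← Nat.factorial_mul_ascFactorial, Nat.factorial_succ]
        ring_nf
    _ = (m * n + n)! * ((m * n + n) + 1).ascFactorial (m + 1) := by
        rw [Nat.add_choose_mul_factorial_mul_factorial, Nat.factorial_mul_ascFactorial]
        ring_nf
    _ = ((m + 1) * n).choose n * ((m + 1) * n + 1).ascFactorial (m + 1) *
          (n ! * (m * n)!) := by
        rw [← Nat.add_choose_mul_factorial_mul_factorial (m * n) n]
        ring_nf

theorem tendsto_affine_div_affine (a b f : ℝ) {e : ℝ} (he : e ≠ 0) :
    Tendsto (fun n : ℕ => (a * n + b) / (e * n + f)) atTop (𝓝 (a / e)) := by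
  have h : Tendsto (fun n : ℕ => (a + b / n) / (e + f / n)) atTop (𝓝 ((a + 0) / (e + 0))) :=
    (tendsto_const_nhds.add (tendsto_const_div_atTop_nhds_zero_nat b)).div
      (tendsto_const_nhds.add (tendsto_const_div_atTop_nhds_zero_nat f)) (by simpa using he)
  rw [add_zero, add_zero] at h
  refine h.congr' ?_
  filter_upwards [eventually_ne_atTop 0] with n hn
  rw [← mul_div_mul_right _ _ (Nat.cast_ne_zero.2 hn)]
  congr 1 <;> field_simp

theorem choose_succ_mul_div_choose_mul (m n : ℕ) :
    (((m + 1) * (n + 1)).choose (n + 1) : ℝ) / ((m + 1) * n).choose n =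
      (((m : ℝ) + 1) * n + 1) / (1 * n + 1) *
        ∏ i ∈ range m, (((m : ℝ) + 1) * n + (i + 2)) / (m * n + (i + 1)) := by
  have key := congrArg (Nat.cast : ℕ → ℝ) (Nat.choose_succ_mul_succ_mul_ascFactorial m n)
  simp only [Nat.ascFactorial_eq_prod_range, prod_range_succ'] at key
  push_cast at key
  have hchoose : (((m + 1) * n).choose n : ℝ) ≠ 0 := by
    exact_mod_cast (Nat.choose_pos (Nat.le_mul_of_pos_left n m.succ_pos)).ne'
  rw [prod_div_distrib, div_mul_div_comm, div_eq_div_iff hchoose (by positivity)]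
  have e1 : ∏ i ∈ range m, ((m : ℝ) * n + (i + 1)) = ∏ i ∈ range m, ((m : ℝ) * n + 1 + i) :=
    prod_congr rfl fun i _ => by ring
  have e2 : ∏ i ∈ range m, (((m : ℝ) + 1) * n + (i + 2)) =
      ∏ i ∈ range m, (((m : ℝ) + 1) * n + 1 + (i + 1)) :=
    prod_congr rfl fun i _ => by ring
  rw [e1, e2]
  linear_combination key

theorem tendsto_choose_succ_mul_div_choose_mul (m : ℕ) :
    Tendsto (fun n : ℕ => (((m + 1) * (n + 1)).choose (n + 1) : ℝ) / ((m + 1) * n).choose n)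
      atTop (𝓝 (((m : ℝ) + 1) ^ (m + 1) / m ^ m)) := by
  simp_rw [choose_succ_mul_div_choose_mul]
  convert (tendsto_affine_div_affine ((m : ℝ) + 1) 1 1 one_ne_zero).mul
    (tendsto_finsetProd (range m) fun (i : ℕ) hi =>
      tendsto_affine_div_affine ((m : ℝ) + 1) ((i : ℝ) + 2) ((i : ℝ) + 1)
        (Nat.cast_ne_zero.2 (Nat.ne_zero_of_lt (mem_range.1 hi)))) using 2
  rw [prod_const, card_range, div_one, div_pow, pow_succ']
  ring

/-- The Fuss–Catalan number `ζ_j` of order `ν = m + 1`. -/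
noncomputable def fussCatalan (m j : ℕ) : ℝ := ((m + 1) * j).choose j / (m * j + 1)

theorem fussCatalan_pos (m j : ℕ) : 0 < fussCatalan m j := by
  have : 0 < ((m + 1) * j).choose j := Nat.choose_pos (Nat.le_mul_of_pos_left j m.succ_pos)
  unfold fussCatalan
  positivity

theorem fussCatalan_succ_div (m n : ℕ) :
    fussCatalan m (n + 1) / fussCatalan m n =
      (((m + 1) * (n + 1)).choose (n + 1) : ℝ) / ((m + 1) * n).choose n *
        ((m * n + 1) / (m * n + (m + 1))) := by
  have hchoose : (((m + 1) * n).choose n : ℝ) ≠ 0 := by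
    exact_mod_cast (Nat.choose_pos (Nat.le_mul_of_pos_left n m.succ_pos)).ne'
  unfold fussCatalan
  push_cast
  field_simp
  ring

theorem tendsto_fussCatalan_succ_div {m : ℕ} (hm : m ≠ 0) :
    Tendsto (fun n => fussCatalan m (n + 1) / fussCatalan m n) atTop
      (𝓝 (((m : ℝ) + 1) ^ (m + 1) / m ^ m)) := by
  have hm' : (m : ℝ) ≠ 0 := by exact_mod_cast hm
  simp_rw [fussCatalan_succ_div]
  simpa [div_self hm'] using
    (tendsto_choose_succ_mul_div_choose_mul m).mul
      (tendsto_affine_div_affine (m : ℝ) 1 (m + 1) hm')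

theorem radius_ofScalars_pow_mul_fussCatalan {m : ℕ} (hm : m ≠ 0) {c : ℝ} (hc : 0 < c) :
    (FormalMultilinearSeries.ofScalars ℝ fun j => c ^ j * fussCatalan m j).radius =
      ENNReal.ofReal (m ^ m / (c * ((m : ℝ) + 1) ^ (m + 1))) := by
  set L := c * (((m : ℝ) + 1) ^ (m + 1) / m ^ m) with hLdef
  have hL : 0 < L := mul_pos hc (div_pos (by positivity) (by positivity))
  have hratio : Tendsto (fun n => ‖c ^ (n + 1) * fussCatalan m (n + 1)‖ /
      ‖c ^ n * fussCatalan m n‖) atTop (𝓝 L.toNNReal) := by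
    rw [Real.coe_toNNReal _ hL.le]
    refine (tendsto_const_nhds.mul (tendsto_fussCatalan_succ_div hm)).congr fun n => ?_
    have := fussCatalan_pos m n
    have := fussCatalan_pos m (n + 1)
    rw [Real.norm_of_nonneg (by positivity), Real.norm_of_nonneg (by positivity), pow_succ]
    field_simp
  rw [FormalMultilinearSeries.ofScalars_radius_eq_inv_of_tendsto ℝ _
    (Real.toNNReal_pos.mpr hL).ne' hratio, ← Real.toNNReal_inv]
  change ENNReal.ofReal _ = _
  rw [hLdef]
  field_simp

/-- For every integer `ν ≥ 2`, the real power series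
`Σ_{j≥0} c_ν^j ζ_j s^j` (the generating function `z_0` of the generalized Catalan
numbers, with `c_ν = 2ν·binom(2ν−1, ν−1)` and `ζ_j = binom(νj, j)/((ν−1)j+1)`)
has radius of convergence exactly `s_c = (ν−1)^{ν−1}/(c_ν ν^ν)`. -/
theorem catalan_series_radius_of_convergence (ν : ℕ) (hν : 2 ≤ ν) :
    (FormalMultilinearSeries.ofScalars ℝ
        (fun j => (2 * ν * (Nat.choose (2 * ν - 1) (ν - 1)) : ℝ) ^ j *
          ((Nat.choose (ν * j) j : ℝ) / (((ν : ℝ) - 1) * j + 1)))).radius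
      = ENNReal.ofReal
          (((ν : ℝ) - 1) ^ (ν - 1) /
            ((2 * ν * (Nat.choose (2 * ν - 1) (ν - 1)) : ℝ) * (ν : ℝ) ^ ν)) := by
  obtain ⟨m, rfl⟩ : ∃ m, ν = m + 1 := ⟨ν - 1, by omega⟩
  simp only [Nat.add_sub_cancel, Nat.cast_add, Nat.cast_one, add_sub_cancel_right]
  have : 0 < (2 * (m + 1) - 1).choose m := Nat.choose_pos (by omega)
  exact radius_ofScalars_pow_mul_fussCatalan (by omega) (by positivity)
end

section
/- Let ν ≥ 2 and k ≥ 1 be integers, I ⊆ ℝ an open interval, and z₀ : I → ℝ a smooth function satisfying z₀′(s) = c_ν · z₀(s)^{ν+1}/(ν − (ν−1)z₀(s)) with ν − (ν−1)z₀(s) ≠ 0 on I. Given real numbers a_ℓ (ℓ ∈ ℤ) with a_ℓ = 0 for ℓ < 0 and for ℓ ≥ 3k, define a_ℓ^{(j)} by the recursion in the context, and define Z(s) = z₀(s)·Σ_{ℓ=0}^{3k−1} a_ℓ · (ν − (ν−1)z₀(s))^{−(2k+ℓ)}. Then Z is smooth on I, and for every j ≥ 0 and every s ∈ I, the j-th derivative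 of Z satisfies Z^{(j)}(s) = c_ν^j · z₀(s)^{jν+1} · Σ_{ℓ=0}^{3k−1+j} a_ℓ^{(j)} · (ν − (ν−1)z₀(s))^{−(2k+ℓ+j)}; moreover a_ℓ^{(j)} = 0 for ℓ < 0 and for ℓ ≥ 3k + j. -/
private lemma term_identity (ν j : ℕ) (c P W z' : ℝ) (hW : W ≠ 0)
    (hz' : z' = c * P ^ (ν + 1) / W) (hPW : ((ν:ℝ) - 1) * P = (ν:ℝ) - W) (m : ℤ) :
    (↑(j * ν + 1) : ℝ) * P ^ (j * ν + 1 - 1) * z' * W ^ m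
      + P ^ (j * ν + 1) * ((m : ℝ) * W ^ (m - 1) * (-(((ν:ℝ) - 1) * z'))) =
    c * P ^ ((j+1) * ν + 1) *
      (((j:ℝ) * ν + 1 + m) * W ^ (m - 1) + (-(m:ℝ) * ν) * W ^ (m - 2)) := by
  subst hz'
  have e0 : W ^ m = W ^ (m - 2) * W ^ (2:ℕ) := by
    rw [← zpow_natCast W 2, ← zpow_add₀ hW]; norm_num
  have e1 : W ^ (m - 1) = W ^ (m - 2) * W ^ (1:ℕ) := by
    rw [← zpow_natCast W 1, ← zpow_add₀ hW]; ring_nf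
  rw [e0, e1]
  have hp : j * ν + 1 - 1 = j * ν := rfl
  rw [hp]
  generalize W ^ (m - 2) = u
  field_simp
  push_cast
  linear_combination (-(m:ℝ) * u * c * P ^ (j*ν+ν+1)) * hPW

/-- Let `ν ≥ 2`, `k ≥ 1`, `I = (p, q)` an open interval, and
`z₀ : I → ℝ` smooth with `z₀′ = c_ν z₀^{ν+1}/(ν − (ν−1)z₀)` and `ν − (ν−1)z₀ ≠ 0`
on `I`.  Given `a_ℓ` (`ℓ ∈ ℤ`) vanishing for `ℓ < 0` and `ℓ ≥ 3k`, and `a_ℓ^{(j)}`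
defined by the recursion
`a_ℓ^{(j)} = ((j−1)ν − (2k+ℓ+j−2))·a_ℓ^{(j−1)} + ν(2k+ℓ+j−2)·a_{ℓ−1}^{(j−1)}`,
the function `Z(s) = z₀(s)·Σ_{ℓ=0}^{3k−1} a_ℓ (ν − (ν−1)z₀(s))^{−(2k+ℓ)}` is smooth
on `I` and its `j`-th derivative equals
`c_ν^j z₀^{jν+1} Σ_{ℓ=0}^{3k−1+j} a_ℓ^{(j)} (ν − (ν−1)z₀)^{−(2k+ℓ+j)}`;
moreover `a_ℓ^{(j)} = 0` for `ℓ < 0` and for `ℓ ≥ 3k + j`. -/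
theorem derivatives_of_laurent_form
    (ν k : ℕ) (hν : 2 ≤ ν) (hk : 1 ≤ k)
    (c : ℝ) (hc : c = 2 * ν * (Nat.choose (2 * ν - 1) (ν - 1)))
    (p q : ℝ) (z₀ : ℝ → ℝ)
    (hsm : ContDiffOn ℝ (⊤ : ℕ∞) z₀ (Set.Ioo p q))
    (hden : ∀ s ∈ Set.Ioo p q, (ν : ℝ) - ((ν : ℝ) - 1) * z₀ s ≠ 0)
    (hode : ∀ s ∈ Set.Ioo p q,
      HasDerivAt z₀ (c * z₀ s ^ (ν + 1) / ((ν : ℝ) - ((ν : ℝ) - 1) * z₀ s)) s)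
    (a : ℤ → ℝ) (ha : ∀ ℓ : ℤ, ℓ < 0 ∨ 3 * (k : ℤ) ≤ ℓ → a ℓ = 0)
    (A : ℕ → ℤ → ℝ) (hA0 : A 0 = a)
    (hArec : ∀ (j : ℕ) (ℓ : ℤ), A (j + 1) ℓ =
      (((j : ℤ) * ν - (2 * (k : ℤ) + ℓ + ((j : ℤ) + 1) - 2) : ℤ) : ℝ) * A j ℓ
        + (ν : ℝ) * ((2 * (k : ℤ) + ℓ + ((j : ℤ) + 1) - 2 : ℤ) : ℝ) * A j (ℓ - 1))
    (Z : ℝ → ℝ)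
    (hZ : ∀ s, Z s = z₀ s * ∑ ℓ ∈ Finset.range (3 * k),
      a (ℓ : ℤ) * ((ν : ℝ) - ((ν : ℝ) - 1) * z₀ s) ^ (-(2 * (k : ℤ) + (ℓ : ℤ)))) :
    ContDiffOn ℝ (⊤ : ℕ∞) Z (Set.Ioo p q) ∧
      (∀ (j : ℕ), ∀ s ∈ Set.Ioo p q,
        iteratedDeriv j Z s =
          c ^ j * z₀ s ^ (j * ν + 1) *
            ∑ ℓ ∈ Finset.range (3 * k + j),
              A j (ℓ : ℤ) *
                ((ν : ℝ) - ((ν : ℝ) - 1) * z₀ s) ^ (-(2 * (k : ℤ) + (ℓ : ℤ) + (j : ℤ)))) ∧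
      (∀ (j : ℕ) (ℓ : ℤ), ℓ < 0 ∨ 3 * (k : ℤ) + (j : ℤ) ≤ ℓ → A j ℓ = 0) := by
  -- notation
  set w : ℝ → ℝ := fun s => (ν : ℝ) - ((ν : ℝ) - 1) * z₀ s with hwdef
  -- vanishing of A
  have hvan : ∀ (j : ℕ) (ℓ : ℤ), ℓ < 0 ∨ 3 * (k : ℤ) + (j : ℤ) ≤ ℓ → A j ℓ = 0 := by
    intro j
    induction j with
    | zero =>
      intro ℓ hℓ
      rw [hA0]; exact ha ℓ (by simpa using hℓ)
    | succ j ih =>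
      intro ℓ hℓ
      rw [hArec]
      rcases hℓ with h | h
      · rw [ih ℓ (Or.inl h), ih (ℓ - 1) (Or.inl (by omega))]; ring
      · rw [ih ℓ (Or.inr (by push_cast at h ⊢; omega)),
          ih (ℓ - 1) (Or.inr (by push_cast at h ⊢; omega))]; ring
  -- the family of functions
  set F : ℕ → ℝ → ℝ := fun j s => c ^ j * z₀ s ^ (j * ν + 1) *
      ∑ ℓ ∈ Finset.range (3 * k + j),
        A j (ℓ : ℤ) * w s ^ (-(2 * (k : ℤ) + (ℓ : ℤ) + (j : ℤ))) with hF
  have hF0 : ∀ s, F 0 s = Z s := by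
    intro s
    rw [hZ s, hF]
    simp [hA0]
    exact Or.inl rfl
  -- key derivative step
  have hder : ∀ (j : ℕ), ∀ s ∈ Set.Ioo p q, HasDerivAt (F j) (F (j + 1) s) s := by
    intro j s hs
    have hW : w s ≠ 0 := hden s hs
    have hz : HasDerivAt z₀ (c * z₀ s ^ (ν + 1) / w s) s := hode s hs
    have hwd : HasDerivAt w (-(((ν : ℝ) - 1) * (c * z₀ s ^ (ν + 1) / w s))) s :=
      ((hz.const_mul ((ν : ℝ) - 1)).const_sub (ν : ℝ))
    have hterm : ∀ ℓ : ℕ, HasDerivAt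
        (fun s => z₀ s ^ (j * ν + 1) * w s ^ (-(2 * (k : ℤ) + (ℓ : ℤ) + (j : ℤ))))
        (c * z₀ s ^ ((j + 1) * ν + 1) *
          (((j : ℝ) * ν + 1 + (-(2 * (k : ℤ) + (ℓ : ℤ) + (j : ℤ)) : ℤ)) *
              w s ^ ((-(2 * (k : ℤ) + (ℓ : ℤ) + (j : ℤ))) - 1)
            + (-((-(2 * (k : ℤ) + (ℓ : ℤ) + (j : ℤ)) : ℤ) : ℝ) * ν) *
              w s ^ ((-(2 * (k : ℤ) + (ℓ : ℤ) + (j : ℤ))) - 2))) s := by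
      intro ℓ
      set m : ℤ := -(2 * (k : ℤ) + (ℓ : ℤ) + (j : ℤ)) with hm
      have hzp : HasDerivAt (fun s => w s ^ m)
          (((m : ℝ) * w s ^ (m - 1)) * (-(((ν : ℝ) - 1) * (c * z₀ s ^ (ν + 1) / w s)))) s := by
        exact (hasDerivAt_zpow m (w s) (Or.inl hW)).comp s hwd
      have := (hz.pow (j * ν + 1)).mul hzp
      rw [← term_identity ν j c (z₀ s) (w s) (c * z₀ s ^ (ν + 1) / w s) hW rfl (by ring) m]
      exact this
    -- sum form
    have hsum : HasDerivAt
        (fun s => ∑ ℓ ∈ Finset.range (3 * k + j),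
          A j (ℓ : ℤ) * (z₀ s ^ (j * ν + 1) * w s ^ (-(2 * (k : ℤ) + (ℓ : ℤ) + (j : ℤ)))))
        (∑ ℓ ∈ Finset.range (3 * k + j),
          A j (ℓ : ℤ) * (c * z₀ s ^ ((j + 1) * ν + 1) *
            (((j : ℝ) * ν + 1 + (-(2 * (k : ℤ) + (ℓ : ℤ) + (j : ℤ)) : ℤ)) *
                w s ^ ((-(2 * (k : ℤ) + (ℓ : ℤ) + (j : ℤ))) - 1)
              + (-((-(2 * (k : ℤ) + (ℓ : ℤ) + (j : ℤ)) : ℤ) : ℝ) * ν) *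
                w s ^ ((-(2 * (k : ℤ) + (ℓ : ℤ) + (j : ℤ))) - 2)))) s :=
      HasDerivAt.fun_sum fun ℓ _ => (hterm ℓ).const_mul _
    have hFj : F j = fun s => c ^ j * ∑ ℓ ∈ Finset.range (3 * k + j),
        A j (ℓ : ℤ) * (z₀ s ^ (j * ν + 1) * w s ^ (-(2 * (k : ℤ) + (ℓ : ℤ) + (j : ℤ)))) := by
      funext t
      rw [hF]
      simp only [Finset.mul_sum]
      exact Finset.sum_congr rfl fun ℓ _ => by ring
    rw [hFj]
    have hd2 := hsum.const_mul (c ^ j)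
    refine hd2.congr_deriv (Eq.symm ?_)
    -- now the sum identity
    simp only [hF]
    have key : ∑ ℓ ∈ Finset.range (3 * k + (j + 1)),
        A (j + 1) (ℓ : ℤ) * w s ^ (-(2 * (k : ℤ) + (ℓ : ℤ) + ((j + 1 : ℕ) : ℤ))) =
        ∑ ℓ ∈ Finset.range (3 * k + j),
          A j (ℓ : ℤ) *
            (((j : ℝ) * ν + 1 + (-(2 * (k : ℤ) + (ℓ : ℤ) + (j : ℤ)) : ℤ)) *
                w s ^ ((-(2 * (k : ℤ) + (ℓ : ℤ) + (j : ℤ))) - 1)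
              + (-((-(2 * (k : ℤ) + (ℓ : ℤ) + (j : ℤ)) : ℤ) : ℝ) * ν) *
                w s ^ ((-(2 * (k : ℤ) + (ℓ : ℤ) + (j : ℤ))) - 2)) := by
      have expand : ∀ ℓ : ℕ,
          A (j + 1) (ℓ : ℤ) * w s ^ (-(2 * (k : ℤ) + (ℓ : ℤ) + ((j + 1 : ℕ) : ℤ))) =
          ((((j : ℤ) * ν - (2 * (k : ℤ) + (ℓ : ℤ) + ((j : ℤ) + 1) - 2) : ℤ) : ℝ) * A j (ℓ : ℤ)) *
              w s ^ ((-(2 * (k : ℤ) + (ℓ : ℤ) + (j : ℤ))) - 1)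
            + ((ν : ℝ) * ((2 * (k : ℤ) + (ℓ : ℤ) + ((j : ℤ) + 1) - 2 : ℤ) : ℝ) *
                A j ((ℓ : ℤ) - 1)) *
              w s ^ ((-(2 * (k : ℤ) + (ℓ : ℤ) + (j : ℤ))) - 1) := by
        intro ℓ
        rw [hArec]
        have hE : (-(2 * (k : ℤ) + (ℓ : ℤ) + ((j + 1 : ℕ) : ℤ))) =
            (-(2 * (k : ℤ) + (ℓ : ℤ) + (j : ℤ))) - 1 := by push_cast; ring
        rw [hE]
        ring
      have step1 : ∑ ℓ ∈ Finset.range (3 * k + (j + 1)),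
          A (j + 1) (ℓ : ℤ) * w s ^ (-(2 * (k : ℤ) + (ℓ : ℤ) + ((j + 1 : ℕ) : ℤ))) =
          (∑ ℓ ∈ Finset.range (3 * k + j + 1),
            ((((j : ℤ) * ν - (2 * (k : ℤ) + (ℓ : ℤ) + ((j : ℤ) + 1) - 2) : ℤ) : ℝ) * A j (ℓ : ℤ)) *
              w s ^ ((-(2 * (k : ℤ) + (ℓ : ℤ) + (j : ℤ))) - 1))
          + (∑ ℓ ∈ Finset.range (3 * k + j + 1),
            ((ν : ℝ) * ((2 * (k : ℤ) + (ℓ : ℤ) + ((j : ℤ) + 1) - 2 : ℤ) : ℝ) *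
                A j ((ℓ : ℤ) - 1)) *
              w s ^ ((-(2 * (k : ℤ) + (ℓ : ℤ) + (j : ℤ))) - 1)) := by
        rw [← Finset.sum_add_distrib]
        exact Finset.sum_congr rfl fun ℓ _ => expand ℓ
      have h1 : ∑ ℓ ∈ Finset.range (3 * k + j + 1),
            ((((j : ℤ) * ν - (2 * (k : ℤ) + (ℓ : ℤ) + ((j : ℤ) + 1) - 2) : ℤ) : ℝ) * A j (ℓ : ℤ)) *
              w s ^ ((-(2 * (k : ℤ) + (ℓ : ℤ) + (j : ℤ))) - 1) =
          ∑ ℓ ∈ Finset.range (3 * k + j),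
            A j (ℓ : ℤ) * ((((j : ℝ) * ν + 1 + (-(2 * (k : ℤ) + (ℓ : ℤ) + (j : ℤ)) : ℤ)) *
              w s ^ ((-(2 * (k : ℤ) + (ℓ : ℤ) + (j : ℤ))) - 1))) := by
        rw [Finset.sum_range_succ,
          hvan j ((3 * k + j : ℕ) : ℤ) (Or.inr (by push_cast; omega))]
        rw [mul_zero, zero_mul, add_zero]
        refine Finset.sum_congr rfl fun ℓ _ => ?_
        push_cast
        ring
      have h2 : ∑ ℓ ∈ Finset.range (3 * k + j + 1),
            ((ν : ℝ) * ((2 * (k : ℤ) + (ℓ : ℤ) + ((j : ℤ) + 1) - 2 : ℤ) : ℝ) *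
                A j ((ℓ : ℤ) - 1)) *
              w s ^ ((-(2 * (k : ℤ) + (ℓ : ℤ) + (j : ℤ))) - 1) =
          ∑ ℓ ∈ Finset.range (3 * k + j),
            A j (ℓ : ℤ) * ((-((-(2 * (k : ℤ) + (ℓ : ℤ) + (j : ℤ)) : ℤ) : ℝ) * ν) *
              w s ^ ((-(2 * (k : ℤ) + (ℓ : ℤ) + (j : ℤ))) - 2)) := by
        rw [Finset.sum_range_succ']
        have hz0 : A j (((0 : ℕ) : ℤ) - 1) = 0 :=
          hvan j (((0 : ℕ) : ℤ) - 1) (Or.inl (by norm_num))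
        rw [hz0, mul_zero, zero_mul, add_zero]
        refine Finset.sum_congr rfl fun ℓ _ => ?_
        have hc1 : (((ℓ + 1 : ℕ) : ℤ)) = (ℓ : ℤ) + 1 := by push_cast; ring
        rw [hc1]
        have hc2 : ((ℓ : ℤ) + 1) - 1 = (ℓ : ℤ) := by ring
        have hc3 : (-(2 * (k : ℤ) + ((ℓ : ℤ) + 1) + (j : ℤ))) - 1 =
            (-(2 * (k : ℤ) + (ℓ : ℤ) + (j : ℤ))) - 2 := by ring
        rw [hc2, hc3]
        push_cast
        ring
      rw [step1, h1, h2, ← Finset.sum_add_distrib]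
      exact Finset.sum_congr rfl fun ℓ _ => by ring
    rw [key, Finset.mul_sum, Finset.mul_sum]
    refine Finset.sum_congr rfl fun ℓ _ => ?_
    ring
  -- iterated derivatives
  have hiter : ∀ j : ℕ, Set.EqOn (iteratedDeriv j Z) (F j) (Set.Ioo p q) := by
    intro j
    induction j with
    | zero => intro s _; rw [iteratedDeriv_zero, hF0]
    | succ j ih =>
      intro s hs
      rw [iteratedDeriv_succ]
      have hev : iteratedDeriv j Z =ᶠ[nhds s] F j :=
        Filter.eventuallyEq_of_mem (isOpen_Ioo.mem_nhds hs) ih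
      rw [hev.deriv_eq, (hder j s hs).deriv]
  refine ⟨?_, fun j s hs => hiter j hs, hvan⟩
  -- smoothness
  have hwsm : ContDiffOn ℝ (⊤ : ℕ∞) w (Set.Ioo p q) :=
    contDiffOn_const.sub (contDiffOn_const.mul hsm)
  have hZsm : ContDiffOn ℝ (⊤ : ℕ∞) (fun s => z₀ s * ∑ ℓ ∈ Finset.range (3 * k),
      a (ℓ : ℤ) * w s ^ (-(2 * (k : ℤ) + (ℓ : ℤ)))) (Set.Ioo p q) := by
    refine hsm.mul (ContDiffOn.sum fun ℓ _ => contDiffOn_const.mul ?_)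
    have hrw : ∀ s : ℝ, w s ^ (-(2 * (k : ℤ) + (ℓ : ℤ))) = (w s ^ (2 * k + ℓ : ℕ))⁻¹ := by
      intro s
      rw [← zpow_natCast (w s) (2 * k + ℓ), ← zpow_neg]
      congr 1
    refine ContDiffOn.congr ?_ fun s _ => hrw s
    exact (hwsm.pow _).inv fun s hs => pow_ne_zero _ (hden s hs)
  exact hZsm.congr fun s _ => hZ s
end

section
/- Fix integers ν ≥ 2 and k ≥ 1, and real numbers a_ℓ (ℓ ∈ ℤ) with a_ℓ = 0 for ℓ < 0 and for ℓ ≥ 3k. With a_ℓ^{(j)} and P_j^{(n,k)} defined by the recursions in the context, the following vanishing identity holds: for every integer n ≥ 1 and every integer m with 0 ≤ m ≤ n−1, Σ_{j=0}^{n} P_j^{(n,k)} · Σ_{r=0}^{m} (−1)^{j−r} · binom(j, r) · a_{m−r}^{(j)} = 0. -/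
/-!
Put `c = 2k - 1`, `f_j = ∑_{t ≥ 0} a_t^{(j)} X^t` and `h_j = (X - 1)^j f_j` in `ℝ⟦X⟧`, so that the
inner sum of the theorem is the coefficient of `X^m` in `h_j`. The recursion for `a^{(j)}` is the
differential equation `f_{j+1} = X(νX - 1) f_j' + (c(νX - 1) + j(ν - 1) + ν(j + 1)X) f_j`, which becomes
`h_{j+1} = D_{j(ν-1)} h_j` for the operators (`diffOp ν c s`)
`D_s g = X(X - 1)(νX - 1) g' + (νX(X - 1) + c(X - 1)(νX - 1) - s) g`.
As `D_s + (s - t) = D_t`, the recursion for `P` turns into `G_{n+1} = D_{c+n} G_n` for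
`G_n = ∑_j P_j^{(n,k)} h_j`. On `X^n u` the derivative term of `D_{c+n}` contributes `n X^n u` plus
multiples of `X^{n+1}`, which cancels the constant `-n` of its multiplier; so `D_{c+n}` maps
`X^n R⟦X⟧` into `X^{n+1} R⟦X⟧`, hence `X^n ∣ G_n`, and the coefficient of `X^m` in `G_n`, which is
the sum of the theorem, vanishes for `m < n`.
-/

/-- `Pcoeff ν k n j` is the paper's `P_j^{(n,k)}`. -/
def Pcoeff (ν k : ℕ) : ℕ → ℤ → ℤ
  | 0, j => if j = 0 then 1 else 0
  | n + 1, j =>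
      if j < 0 ∨ ((n : ℤ) + 1) < j then 0
      else Pcoeff ν k n (j - 1) +
        (((ν : ℤ) - 1) * j - (2 * (k : ℤ) - 2 + ((n : ℤ) + 1))) * Pcoeff ν k n j

theorem Pcoeff_of_neg (ν k n : ℕ) {j : ℤ} (hj : j < 0) : Pcoeff ν k n j = 0 := by
  cases n
  · rw [Pcoeff, if_neg (by omega)]
  · rw [Pcoeff, if_pos (by omega)]

theorem Pcoeff_of_lt (ν k n : ℕ) {j : ℤ} (hj : n < j) : Pcoeff ν k n j = 0 := by
  cases n
  · rw [Pcoeff, if_neg (by omega)]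
  · rw [Pcoeff, if_pos (by omega)]

theorem Pcoeff_succ (ν k n j : ℕ) (hj : j ≤ n + 1) :
    Pcoeff ν k (n + 1) j =
      Pcoeff ν k n (j - 1) + ((ν - 1) * j - (2 * k - 1 + n)) * Pcoeff ν k n j := by
  rw [Pcoeff, if_neg (by omega)]
  ring

namespace PowerSeries

variable {R : Type*} [CommRing R]

theorem coeff_X_sub_one_pow (j r : ℕ) :
    coeff r ((X - 1 : R⟦X⟧) ^ j) = (-1) ^ (j + r) * j.choose r := by
  have hcoe : (X - 1 : R⟦X⟧) ^ j = ((Polynomial.X + Polynomial.C (-1)) ^ j : Polynomial R) := by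
    simp [sub_eq_add_neg]
  rw [hcoe, Polynomial.coeff_coe, Polynomial.coeff_X_add_C_pow]
  rcases le_or_gt r j with h | h
  · rw [show j + r = (j - r) + 2 * r by omega, pow_add, pow_mul]
    simp
  · simp [Nat.choose_eq_zero_of_lt h]

theorem coeff_X_sub_one_pow_mul (j m : ℕ) (f : R⟦X⟧) :
    coeff m ((X - 1) ^ j * f) =
      ∑ r ∈ Finset.range (m + 1), (-1) ^ (j + r) * j.choose r * coeff (m - r) f := by
  rw [coeff_mul, Finset.Nat.sum_antidiagonal_eq_sum_range_succ (fun r s => coeff r _ * coeff s f)]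
  simp only [coeff_X_sub_one_pow]

theorem mul_derivative_pow (g : R⟦X⟧) (n : ℕ) :
    g * d⁄dX R (g ^ n) = n * g ^ n * d⁄dX R g := by
  cases n with
  | zero => simp
  | succ n => rw [derivative_pow, Nat.add_sub_cancel, pow_succ]; ring

end PowerSeries

open PowerSeries

section

variable {R : Type*} [CommRing R]

noncomputable def diffOp (ν c s : R) : R⟦X⟧ →ₗ[R] R⟦X⟧ :=
  LinearMap.mulLeft R (X * (X - 1) * (C ν * X - 1)) ∘ₗ (d⁄dX R).toLinearMap +
    LinearMap.mulLeft R (C ν * X * (X - 1) + C c * (X - 1) * (C ν * X - 1) - C s)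

theorem diffOp_apply (ν c s : R) (g : R⟦X⟧) :
    diffOp ν c s g = X * (X - 1) * (C ν * X - 1) * d⁄dX R g +
      (C ν * X * (X - 1) + C c * (X - 1) * (C ν * X - 1) - C s) * g :=
  rfl

theorem diffOp_add_smul (ν c s t : R) (g : R⟦X⟧) :
    diffOp ν c s g + (s - t) • g = diffOp ν c t g := by
  simp only [diffOp_apply, smul_eq_C_mul, map_sub]
  ring

theorem X_pow_succ_dvd_diffOp {n : ℕ} {g : R⟦X⟧} (hg : X ^ n ∣ g) (ν c : R) :
    X ^ (n + 1) ∣ diffOp ν c (c + n) g := by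
  obtain ⟨u, rfl⟩ := hg
  have hX := mul_derivative_pow (X : R⟦X⟧) n
  rw [derivative_X, mul_one] at hX
  refine ⟨(X - 1) * (C ν * X - 1) * d⁄dX R u +
    (((n : R⟦X⟧) + C c) * (C ν * X - C ν - 1) + C ν * (X - 1)) * u, ?_⟩
  rw [diffOp_apply, Derivation.leibniz, smul_eq_mul, smul_eq_mul, map_add, map_natCast]
  linear_combination (X - 1) * (C ν * X - 1) * u * hX

theorem X_sub_one_pow_succ_mul_mk (ν c : R) (j : ℕ) {B B' : ℤ → R} (hB : B (-1) = 0)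
    (hrec : ∀ ℓ : ℤ, B' ℓ = (j * (ν - 1) - c - ℓ) * B ℓ + ν * (c + ℓ + j) * B (ℓ - 1)) :
    (X - 1) ^ (j + 1) * mk (fun t : ℕ => B' t) =
      diffOp ν c (j * (ν - 1)) ((X - 1) ^ j * mk fun t : ℕ => B t) := by
  set f : R⟦X⟧ := mk fun t : ℕ => B t
  have hode : mk (fun t : ℕ => B' t) = ν • (X * (X * d⁄dX R f)) - X * d⁄dX R f +
      (j * (ν - 1) - c) • f + (ν * (c + j + 1)) • (X * f) := by
    ext t
    rcases t with _ | _ | t <;>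
      simp only [f, map_add, map_sub, coeff_smul, coeff_succ_X_mul, coeff_zero_X_mul,
        coeff_derivative, coeff_mk, hrec, Nat.cast_zero, zero_sub, hB, Nat.cast_succ,
        add_sub_cancel_right] <;>
      push_cast <;> ring
  have hpow := mul_derivative_pow (X - 1 : R⟦X⟧) j
  simp only [map_sub, derivative_X, derivative_one, sub_zero, mul_one] at hpow
  rw [hode, diffOp_apply, Derivation.leibniz, smul_eq_mul, smul_eq_mul]
  simp only [smul_eq_C_mul, map_sub, map_mul, map_add, map_natCast, map_one]
  linear_combination -(X * (C ν * X - 1) * f) * hpow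

theorem eq_zero_of_neg_of_rec {B : ℕ → ℤ → R} {x y : ℕ → ℤ → R} (h0 : ∀ ℓ < 0, B 0 ℓ = 0)
    (hrec : ∀ j ℓ, B (j + 1) ℓ = x j ℓ * B j ℓ + y j ℓ * B j (ℓ - 1)) (j : ℕ) :
    ∀ ℓ < 0, B j ℓ = 0 := by
  induction j with
  | zero => exact h0
  | succ j ih =>
    intro ℓ hℓ
    rw [hrec, ih ℓ hℓ, ih (ℓ - 1) (by omega), mul_zero, mul_zero, add_zero]

theorem sum_Pcoeff_smul_succ (ν k : ℕ) {h : ℕ → R⟦X⟧}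
    (hh : ∀ j : ℕ, h (j + 1) = diffOp (ν : R) (2 * k - 1) (j * (ν - 1)) (h j)) (n : ℕ) :
    ∑ j ∈ Finset.range (n + 2), (Pcoeff ν k (n + 1) j : R) • h j =
      diffOp (ν : R) (2 * k - 1) (2 * k - 1 + n)
        (∑ j ∈ Finset.range (n + 1), (Pcoeff ν k n j : R) • h j) := by
  have hsplit : ∀ j ∈ Finset.range (n + 2), (Pcoeff ν k (n + 1) j : R) • h j =
      (Pcoeff ν k n (j - 1) : R) • h j +
        (Pcoeff ν k n j : R) • (((j : R) * (ν - 1) - (2 * k - 1 + n)) • h j) := by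
    intro j hj
    rw [Pcoeff_succ ν k n j (by simpa [Nat.lt_succ_iff] using hj), smul_smul, ← add_smul]
    push_cast
    ring_nf
  rw [Finset.sum_congr rfl hsplit, Finset.sum_add_distrib, Finset.sum_range_succ',
    Finset.sum_range_succ _ (n + 1), Pcoeff_of_neg ν k n (by norm_num),
    Pcoeff_of_lt ν k n (by push_cast; omega), map_sum]
  simp only [Int.cast_zero, zero_smul, add_zero, Nat.cast_add, Nat.cast_one, add_sub_cancel_right,
    ← Finset.sum_add_distrib, ← smul_add, map_smul]
  refine Finset.sum_congr rfl fun j _ => ?_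
  rw [hh, ← diffOp_add_smul _ _ ((j : R) * (ν - 1)) (2 * k - 1 + n)]

theorem X_pow_dvd_sum_Pcoeff_smul (ν k : ℕ) {h : ℕ → R⟦X⟧}
    (hh : ∀ j : ℕ, h (j + 1) = diffOp (ν : R) (2 * k - 1) (j * (ν - 1)) (h j)) (n : ℕ) :
    X ^ n ∣ ∑ j ∈ Finset.range (n + 1), (Pcoeff ν k n j : R) • h j := by
  induction n with
  | zero => simp
  | succ n ih =>
    rw [sum_Pcoeff_smul_succ ν k hh]
    exact X_pow_succ_dvd_diffOp ih _ _

end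

theorem vanishing_lemma_general
    (ν k : ℕ)
    (a : ℤ → ℝ) (ha : ∀ ℓ : ℤ, ℓ < 0 ∨ 3 * (k : ℤ) ≤ ℓ → a ℓ = 0)
    (A : ℕ → ℤ → ℝ) (hA0 : A 0 = a)
    (hArec : ∀ (j : ℕ) (ℓ : ℤ), A (j + 1) ℓ =
      (((j : ℤ) * ν - (2 * (k : ℤ) + ℓ + ((j : ℤ) + 1) - 2) : ℤ) : ℝ) * A j ℓ
        + (ν : ℝ) * ((2 * (k : ℤ) + ℓ + ((j : ℤ) + 1) - 2 : ℤ) : ℝ) * A j (ℓ - 1))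
    (n : ℕ) (hn : 1 ≤ n) (m : ℕ) (hm : m ≤ n - 1) :
    ∑ j ∈ Finset.range (n + 1), (Pcoeff ν k n (j : ℤ) : ℝ) *
        ∑ r ∈ Finset.range (m + 1),
          (-1 : ℝ) ^ (j + r) * (Nat.choose j r : ℝ) * A j ((m : ℤ) - (r : ℤ)) = 0 := by
  have hrec : ∀ (j : ℕ) (ℓ : ℤ), A (j + 1) ℓ = (j * (ν - 1) - (2 * k - 1) - ℓ) * A j ℓ +
      ν * ((2 * k - 1) + ℓ + j) * A j (ℓ - 1) := by
    intro j ℓ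
    rw [hArec]
    push_cast
    ring
  have hneg (j : ℕ) : A j (-1) = 0 :=
    eq_zero_of_neg_of_rec (fun ℓ hℓ => hA0 ▸ ha ℓ (Or.inl hℓ)) hrec j (-1) (by norm_num)
  have hdvd := X_pow_dvd_sum_Pcoeff_smul ν k
    (h := fun j => (X - 1 : ℝ⟦X⟧) ^ j * mk fun t : ℕ => A j t)
    (fun j => X_sub_one_pow_succ_mul_mk _ _ j (hneg j) (hrec j)) n
  have hcoeff := X_pow_dvd_iff.mp hdvd m (by omega)
  simp only [map_sum, coeff_smul, coeff_X_sub_one_pow_mul, coeff_mk, smul_eq_mul] at hcoeff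
  rw [← hcoeff]
  refine Finset.sum_congr rfl fun j _ => congrArg _ (Finset.sum_congr rfl fun r hr => ?_)
  rw [Nat.cast_sub (Finset.mem_range_succ_iff.mp hr)]

/-- Fix `ν ≥ 2`, `k ≥ 1`, and `a_ℓ` (`ℓ ∈ ℤ`) vanishing for
`ℓ < 0` and `ℓ ≥ 3k`.  With `a_ℓ^{(j)}` defined by the recursion
`a_ℓ^{(j)} = ((j−1)ν − (2k+ℓ+j−2))·a_ℓ^{(j−1)} + ν(2k+ℓ+j−2)·a_{ℓ−1}^{(j−1)}`
and `P_j^{(n,k)}` as above, for every `n ≥ 1` and every `0 ≤ m ≤ n−1`: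
`Σ_{j=0}^{n} P_j^{(n,k)} Σ_{r=0}^{m} (−1)^{j−r} binom(j,r) a_{m−r}^{(j)} = 0`. -/
theorem vanishing_lemma
    (ν k : ℕ) (hν : 2 ≤ ν) (hk : 1 ≤ k)
    (a : ℤ → ℝ) (ha : ∀ ℓ : ℤ, ℓ < 0 ∨ 3 * (k : ℤ) ≤ ℓ → a ℓ = 0)
    (A : ℕ → ℤ → ℝ) (hA0 : A 0 = a)
    (hArec : ∀ (j : ℕ) (ℓ : ℤ), A (j + 1) ℓ =
      (((j : ℤ) * ν - (2 * (k : ℤ) + ℓ + ((j : ℤ) + 1) - 2) : ℤ) : ℝ) * A j ℓ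
        + (ν : ℝ) * ((2 * (k : ℤ) + ℓ + ((j : ℤ) + 1) - 2 : ℤ) : ℝ) * A j (ℓ - 1))
    (n : ℕ) (hn : 1 ≤ n) (m : ℕ) (hm : m ≤ n - 1) :
    ∑ j ∈ Finset.range (n + 1), (Pcoeff ν k n (j : ℤ) : ℝ) *
        ∑ r ∈ Finset.range (m + 1),
          (-1 : ℝ) ^ (j + r) * (Nat.choose j r : ℝ) * A j ((m : ℤ) - (r : ℤ)) = 0 :=
  vanishing_lemma_general ν k a ha A hA0 hArec n hn m hm
end

section
/- Let ν ≥ 2 and k ≥ 1 be integers, I ⊆ ℝ an open set, and z₀ : I → ℝ a smooth function satisfying 1 = z₀(s) − c_ν · s · z₀(s)^ν and ν − (ν−1)z₀(s) ≠ 0 for all s ∈ I. Given real numbers a_0, …, a_{3k−1}, define Z(s) = z₀(s)·Σ_{ℓ=0}^{3k−1} a_ℓ·(ν − (ν−1)z₀(s))^{−(2k+ℓ)}. Then for every integer n ≥ 0 there exist real numbers b_n, b_{n+1}, …, b_{3k+2n−1}, depending only on ν, k, n and a_0, …, a_{3k−1}, such that for every s ∈ I the n-th derivative at w = 1 of the function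 w ↦ w^{1−2k}·Z(w^{ν−1} s) equals z₀(s)·Σ_{m=n}^{3k+2n−1} b_m·(ν − (ν−1)z₀(s))^{−(2k+m)}. In particular this derivative, as a Laurent expression in (ν − (ν−1)z₀(s)), has minimal pole order 2k+n and maximal pole order 5k+2n−1. -/
noncomputable def stepCoeff (ν k j : ℕ) (b : ℕ → ℝ) : ℕ → ℝ := fun m =>
  ((m : ℝ) - (j : ℝ)) * b m
  + (if 1 ≤ m then (1 - ((ν : ℝ) + 1) * (2 * (k : ℝ) + (m : ℝ) - 1)) * b (m - 1) else 0)
  + (if 2 ≤ m then (ν : ℝ) * (2 * (k : ℝ) + (m : ℝ) - 2) * b (m - 2) else 0)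

lemma termId (ν k j m : ℕ) (z dv t : ℝ)
    (hu : (ν : ℝ) - ((ν : ℝ) - 1) * z ≠ 0)
    (htdv : t * dv * ((ν : ℝ) - ((ν : ℝ) - 1) * z) = (z - 1) * z) (bm : ℝ) :
    (1 - 2 * (k : ℝ) - (j : ℝ)) * (z * (bm * ((ν : ℝ) - ((ν : ℝ) - 1) * z) ^ (-(2 * (k : ℤ) + (m : ℤ)))))
    + ((ν : ℝ) - 1) * t * (bm * (dv * ((ν : ℝ) - ((ν : ℝ) - 1) * z) ^ (-(2 * (k : ℤ) + (m : ℤ)))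
        + z * (((-(2 * (k : ℤ) + (m : ℤ)) : ℤ) : ℝ) * ((ν : ℝ) - ((ν : ℝ) - 1) * z) ^ (-(2 * (k : ℤ) + (m : ℤ)) - 1)
            * (0 - ((ν : ℝ) - 1) * dv))))
    = bm * (((m : ℝ) - (j : ℝ)) * (z * ((ν : ℝ) - ((ν : ℝ) - 1) * z) ^ (-(2 * (k : ℤ) + (m : ℤ))))
        + (1 - ((ν : ℝ) + 1) * (2 * (k : ℝ) + (m : ℝ))) * (z * ((ν : ℝ) - ((ν : ℝ) - 1) * z) ^ (-(2 * (k : ℤ) + (m : ℤ)) - 1))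
        + (ν : ℝ) * (2 * (k : ℝ) + (m : ℝ)) * (z * ((ν : ℝ) - ((ν : ℝ) - 1) * z) ^ (-(2 * (k : ℤ) + (m : ℤ)) - 2))) := by
  set u : ℝ := (ν : ℝ) - ((ν : ℝ) - 1) * z with hu_def
  have hA2 : u ^ (-(2 * (k : ℤ) + (m : ℤ)))
      = u ^ (-(2 * (k : ℤ) + (m : ℤ)) - 2) * (u * u) := by
    rw [show (-(2 * (k : ℤ) + (m : ℤ))) = (-(2 * (k : ℤ) + (m : ℤ)) - 2) + 1 + 1 by ring,
      zpow_add_one₀ hu, zpow_add_one₀ hu]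
    ring
  have hA1 : u ^ (-(2 * (k : ℤ) + (m : ℤ)) - 1)
      = u ^ (-(2 * (k : ℤ) + (m : ℤ)) - 2) * u := by
    rw [show (-(2 * (k : ℤ) + (m : ℤ)) - 1) = (-(2 * (k : ℤ) + (m : ℤ)) - 2) + 1 by ring,
      zpow_add_one₀ hu]
  rw [hA2, hA1]
  push_cast
  set A : ℝ := u ^ (-(2 * (k : ℤ) + (m : ℤ)) - 2) with hA
  linear_combination (bm * ((ν : ℝ) - 1) * A * u
    + bm * (2 * (k : ℝ) + (m : ℝ)) * ((ν : ℝ) - 1) ^ 2 * z * A) * htdv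

lemma stepSum (ν k j N : ℕ) (b : ℕ → ℝ) (u : ℝ)
    (hbtop : ∀ m, N ≤ m → b m = 0) :
    ∑ m ∈ Finset.range (N + 2), stepCoeff ν k j b m * u ^ (-(2 * (k : ℤ) + (m : ℤ)))
    = ∑ m ∈ Finset.range (N + 2), (((m : ℝ) - (j : ℝ)) * b m * u ^ (-(2 * (k : ℤ) + (m : ℤ)))
        + (1 - ((ν : ℝ) + 1) * (2 * (k : ℝ) + (m : ℝ))) * b m * u ^ (-(2 * (k : ℤ) + (m : ℤ)) - 1)
        + (ν : ℝ) * (2 * (k : ℝ) + (m : ℝ)) * b m * u ^ (-(2 * (k : ℤ) + (m : ℤ)) - 2)) := by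
  have hexp1 : ∀ i : ℕ, (-(2 * (k : ℤ) + ((i + 1 : ℕ) : ℤ))) = -(2 * (k : ℤ) + (i : ℤ)) - 1 := by
    intro i; push_cast; ring
  have h2 : ∑ m ∈ Finset.range (N + 2),
        (if 1 ≤ m then (1 - ((ν : ℝ) + 1) * (2 * (k : ℝ) + (m : ℝ) - 1)) * b (m - 1) else 0)
          * u ^ (-(2 * (k : ℤ) + (m : ℤ)))
      = ∑ m ∈ Finset.range (N + 2),
        (1 - ((ν : ℝ) + 1) * (2 * (k : ℝ) + (m : ℝ))) * b m * u ^ (-(2 * (k : ℤ) + (m : ℤ)) - 1) := by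
    rw [Finset.sum_range_succ' (fun m =>
      (if 1 ≤ m then (1 - ((ν : ℝ) + 1) * (2 * (k : ℝ) + (m : ℝ) - 1)) * b (m - 1) else 0)
        * u ^ (-(2 * (k : ℤ) + (m : ℤ)))) (N + 1)]
    rw [Finset.sum_range_succ (fun m =>
      (1 - ((ν : ℝ) + 1) * (2 * (k : ℝ) + (m : ℝ))) * b m * u ^ (-(2 * (k : ℤ) + (m : ℤ)) - 1)) (N + 1)]
    rw [hbtop (N + 1) (by omega)]
    simp only [if_neg (by omega : ¬ 1 ≤ 0), zero_mul, add_zero, mul_zero, zero_mul]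
    refine Finset.sum_congr rfl fun i _ => ?_
    rw [if_pos (by omega : 1 ≤ i + 1), hexp1 i, Nat.add_sub_cancel]
    push_cast; ring
  have h3 : ∑ m ∈ Finset.range (N + 2),
        (if 2 ≤ m then (ν : ℝ) * (2 * (k : ℝ) + (m : ℝ) - 2) * b (m - 2) else 0)
          * u ^ (-(2 * (k : ℤ) + (m : ℤ)))
      = ∑ m ∈ Finset.range (N + 2),
        (ν : ℝ) * (2 * (k : ℝ) + (m : ℝ)) * b m * u ^ (-(2 * (k : ℤ) + (m : ℤ)) - 2) := by
    rw [Finset.sum_range_succ' (fun m =>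
      (if 2 ≤ m then (ν : ℝ) * (2 * (k : ℝ) + (m : ℝ) - 2) * b (m - 2) else 0)
        * u ^ (-(2 * (k : ℤ) + (m : ℤ)))) (N + 1)]
    rw [Finset.sum_range_succ' (fun i =>
      (if 2 ≤ i + 1 then (ν : ℝ) * (2 * (k : ℝ) + ((i + 1 : ℕ) : ℝ) - 2) * b (i + 1 - 2) else 0)
        * u ^ (-(2 * (k : ℤ) + ((i + 1 : ℕ) : ℤ)))) N]
    rw [Finset.sum_range_succ (fun m =>
      (ν : ℝ) * (2 * (k : ℝ) + (m : ℝ)) * b m * u ^ (-(2 * (k : ℤ) + (m : ℤ)) - 2)) (N + 1)]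
    rw [Finset.sum_range_succ (fun m =>
      (ν : ℝ) * (2 * (k : ℝ) + (m : ℝ)) * b m * u ^ (-(2 * (k : ℤ) + (m : ℤ)) - 2)) N]
    rw [hbtop (N + 1) (by omega), hbtop N (by omega)]
    simp only [if_neg (by omega : ¬ 2 ≤ 0), if_neg (by omega : ¬ 2 ≤ 0 + 1), zero_mul,
      add_zero, mul_zero, zero_mul]
    refine Finset.sum_congr rfl fun i _ => ?_
    rw [if_pos (by omega : 2 ≤ i + 1 + 1), show i + 1 + 1 - 2 = i by omega,
      show (-(2 * (k : ℤ) + ((i + 1 + 1 : ℕ) : ℤ))) = -(2 * (k : ℤ) + (i : ℤ)) - 2 by push_cast; ring]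
    push_cast; ring
  calc ∑ m ∈ Finset.range (N + 2), stepCoeff ν k j b m * u ^ (-(2 * (k : ℤ) + (m : ℤ)))
      = (∑ m ∈ Finset.range (N + 2), ((m : ℝ) - (j : ℝ)) * b m * u ^ (-(2 * (k : ℤ) + (m : ℤ))))
        + (∑ m ∈ Finset.range (N + 2),
            (if 1 ≤ m then (1 - ((ν : ℝ) + 1) * (2 * (k : ℝ) + (m : ℝ) - 1)) * b (m - 1) else 0)
              * u ^ (-(2 * (k : ℤ) + (m : ℤ))))
        + (∑ m ∈ Finset.range (N + 2),
            (if 2 ≤ m then (ν : ℝ) * (2 * (k : ℝ) + (m : ℝ) - 2) * b (m - 2) else 0)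
              * u ^ (-(2 * (k : ℤ) + (m : ℤ)))) := by
        rw [← Finset.sum_add_distrib, ← Finset.sum_add_distrib]
        exact Finset.sum_congr rfl fun m _ => by simp only [stepCoeff]; ring
    _ = (∑ m ∈ Finset.range (N + 2), ((m : ℝ) - (j : ℝ)) * b m * u ^ (-(2 * (k : ℤ) + (m : ℤ))))
        + (∑ m ∈ Finset.range (N + 2),
            (1 - ((ν : ℝ) + 1) * (2 * (k : ℝ) + (m : ℝ))) * b m * u ^ (-(2 * (k : ℤ) + (m : ℤ)) - 1))
        + (∑ m ∈ Finset.range (N + 2),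
            (ν : ℝ) * (2 * (k : ℝ) + (m : ℝ)) * b m * u ^ (-(2 * (k : ℤ) + (m : ℤ)) - 2)) := by
        rw [h2, h3]
    _ = _ := by rw [← Finset.sum_add_distrib, ← Finset.sum_add_distrib]

lemma bracketId (ν k j : ℕ) (z dv t : ℝ)
    (hu : (ν : ℝ) - ((ν : ℝ) - 1) * z ≠ 0)
    (htdv : t * dv * ((ν : ℝ) - ((ν : ℝ) - 1) * z) = (z - 1) * z)
    (N : ℕ) (b : ℕ → ℝ) (hbtop : ∀ m, N ≤ m → b m = 0) :
    (1 - 2 * (k : ℝ) - (j : ℝ)) * (z * ∑ m ∈ Finset.range (N + 2),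
        b m * ((ν : ℝ) - ((ν : ℝ) - 1) * z) ^ (-(2 * (k : ℤ) + (m : ℤ))))
    + ((ν : ℝ) - 1) * t * (∑ m ∈ Finset.range (N + 2),
        b m * (dv * ((ν : ℝ) - ((ν : ℝ) - 1) * z) ^ (-(2 * (k : ℤ) + (m : ℤ)))
          + z * (((-(2 * (k : ℤ) + (m : ℤ)) : ℤ) : ℝ) * ((ν : ℝ) - ((ν : ℝ) - 1) * z) ^ (-(2 * (k : ℤ) + (m : ℤ)) - 1)
              * (0 - ((ν : ℝ) - 1) * dv))))
    = z * ∑ m ∈ Finset.range (N + 2),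
        stepCoeff ν k j b m * ((ν : ℝ) - ((ν : ℝ) - 1) * z) ^ (-(2 * (k : ℤ) + (m : ℤ))) := by
  rw [stepSum ν k j N b _ hbtop, Finset.mul_sum, Finset.mul_sum, Finset.mul_sum, Finset.mul_sum,
    ← Finset.sum_add_distrib]
  refine Finset.sum_congr rfl fun m _ => ?_
  calc (1 - 2 * (k : ℝ) - (j : ℝ)) * (z * (b m * ((ν : ℝ) - ((ν : ℝ) - 1) * z) ^ (-(2 * (k : ℤ) + (m : ℤ)))))
      + ((ν : ℝ) - 1) * t * (b m * (dv * ((ν : ℝ) - ((ν : ℝ) - 1) * z) ^ (-(2 * (k : ℤ) + (m : ℤ)))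
          + z * (((-(2 * (k : ℤ) + (m : ℤ)) : ℤ) : ℝ) * ((ν : ℝ) - ((ν : ℝ) - 1) * z) ^ (-(2 * (k : ℤ) + (m : ℤ)) - 1)
              * (0 - ((ν : ℝ) - 1) * dv))))
      = b m * (((m : ℝ) - (j : ℝ)) * (z * ((ν : ℝ) - ((ν : ℝ) - 1) * z) ^ (-(2 * (k : ℤ) + (m : ℤ))))
        + (1 - ((ν : ℝ) + 1) * (2 * (k : ℝ) + (m : ℝ))) * (z * ((ν : ℝ) - ((ν : ℝ) - 1) * z) ^ (-(2 * (k : ℤ) + (m : ℤ)) - 1))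
        + (ν : ℝ) * (2 * (k : ℝ) + (m : ℝ)) * (z * ((ν : ℝ) - ((ν : ℝ) - 1) * z) ^ (-(2 * (k : ℤ) + (m : ℤ)) - 2))) :=
        termId ν k j m z dv t hu htdv (b m)
    _ = _ := by ring

lemma phiDeriv (ν k M : ℕ) (z₀ : ℝ → ℝ) (b : ℕ → ℝ) (t dv : ℝ)
    (hz : HasDerivAt z₀ dv t)
    (hU : (ν : ℝ) - ((ν : ℝ) - 1) * z₀ t ≠ 0) :
    HasDerivAt (fun x => z₀ x * ∑ m ∈ Finset.range M,
        b m * ((ν : ℝ) - ((ν : ℝ) - 1) * z₀ x) ^ (-(2 * (k : ℤ) + (m : ℤ))))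
      (∑ m ∈ Finset.range M, b m * (dv * ((ν : ℝ) - ((ν : ℝ) - 1) * z₀ t) ^ (-(2 * (k : ℤ) + (m : ℤ)))
        + z₀ t * (((-(2 * (k : ℤ) + (m : ℤ)) : ℤ) : ℝ) * ((ν : ℝ) - ((ν : ℝ) - 1) * z₀ t) ^ (-(2 * (k : ℤ) + (m : ℤ)) - 1)
            * (0 - ((ν : ℝ) - 1) * dv)))) t := by
  have hfun : (fun x => z₀ x * ∑ m ∈ Finset.range M,
        b m * ((ν : ℝ) - ((ν : ℝ) - 1) * z₀ x) ^ (-(2 * (k : ℤ) + (m : ℤ))))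
      = fun x => ∑ m ∈ Finset.range M,
        b m * (z₀ x * ((ν : ℝ) - ((ν : ℝ) - 1) * z₀ x) ^ (-(2 * (k : ℤ) + (m : ℤ)))) := by
    funext x; rw [Finset.mul_sum]; exact Finset.sum_congr rfl fun m _ => by ring
  rw [hfun]
  have hu' : HasDerivAt (fun x => (ν : ℝ) - ((ν : ℝ) - 1) * z₀ x) (0 - ((ν : ℝ) - 1) * dv) t :=
    (hasDerivAt_const t ((ν : ℝ))).sub (hz.const_mul ((ν : ℝ) - 1))
  have hupow : ∀ m : ℕ, HasDerivAt (fun x => ((ν : ℝ) - ((ν : ℝ) - 1) * z₀ x) ^ (-(2 * (k : ℤ) + (m : ℤ))))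
      (((-(2 * (k : ℤ) + (m : ℤ)) : ℤ) : ℝ) * ((ν : ℝ) - ((ν : ℝ) - 1) * z₀ t) ^ (-(2 * (k : ℤ) + (m : ℤ)) - 1)
        * (0 - ((ν : ℝ) - 1) * dv)) t := by
    intro m
    exact (hasDerivAt_zpow (-(2 * (k : ℤ) + (m : ℤ))) _ (Or.inl hU)).comp t hu'
  exact HasDerivAt.fun_sum fun m _ => ((hz.fun_mul (hupow m)).const_mul (b m))



/-- Let `ν ≥ 2`, `k ≥ 1`, `I ⊆ ℝ` open, and `z₀ : I → ℝ` smooth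
with `1 = z₀(s) − c_ν s z₀(s)^ν` and `ν − (ν−1)z₀(s) ≠ 0` on `I`.  Given reals
`a_0, …, a_{3k−1}` and `Z(s) = z₀(s)·Σ_{ℓ=0}^{3k−1} a_ℓ (ν − (ν−1)z₀(s))^{−(2k+ℓ)}`,
for every `n ≥ 0` there exist reals `b_n, …, b_{3k+2n−1}` (depending only on
`ν, k, n` and the `a_ℓ`) such that for every `s ∈ I` the `n`-th derivative at
`w = 1` of `w ↦ w^{1−2k}·Z(w^{ν−1} s)` equals
`z₀(s)·Σ_{m=n}^{3k+2n−1} b_m (ν − (ν−1)z₀(s))^{−(2k+m)}`; in particular, as a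
Laurent expression in `(ν − (ν−1)z₀(s))`, it has minimal pole order `2k+n` and
maximal pole order `5k+2n−1`. -/
theorem w_derivative_of_laurent_form_pole_orders
    (ν k : ℕ) (hν : 2 ≤ ν) (hk : 1 ≤ k)
    (c : ℝ) (hc : c = 2 * ν * (Nat.choose (2 * ν - 1) (ν - 1)))
    (I : Set ℝ) (hI : IsOpen I)
    (z₀ : ℝ → ℝ) (hsm : ContDiffOn ℝ (⊤ : ℕ∞) z₀ I)
    (hrel : ∀ s ∈ I, 1 = z₀ s - c * s * z₀ s ^ ν)
    (hden : ∀ s ∈ I, (ν : ℝ) - ((ν : ℝ) - 1) * z₀ s ≠ 0)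
    (a : ℕ → ℝ)
    (Z : ℝ → ℝ)
    (hZ : ∀ s, Z s = z₀ s * ∑ ℓ ∈ Finset.range (3 * k),
      a ℓ * ((ν : ℝ) - ((ν : ℝ) - 1) * z₀ s) ^ (-(2 * (k : ℤ) + (ℓ : ℤ))))
    (n : ℕ) :
    ∃ b : ℕ → ℝ, ∀ s ∈ I,
      iteratedDeriv n (fun w : ℝ => w ^ ((1 : ℤ) - 2 * (k : ℤ)) * Z (w ^ (ν - 1) * s)) 1
        = z₀ s * ∑ m ∈ Finset.Icc n (3 * k + 2 * n - 1),
            b m * ((ν : ℝ) - ((ν : ℝ) - 1) * z₀ s) ^ (-(2 * (k : ℤ) + (m : ℤ))) := by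
  -- implicit differentiation of z₀
  have hz0deriv : ∀ t ∈ I, ∃ dv : ℝ, HasDerivAt z₀ dv t ∧
      t * dv * ((ν : ℝ) - ((ν : ℝ) - 1) * z₀ t) = (z₀ t - 1) * z₀ t := by
    intro t ht
    have hdiff : DifferentiableAt ℝ z₀ t :=
      (hsm.contDiffAt (hI.mem_nhds ht)).differentiableAt (by simp)
    set dv := deriv z₀ t with hdv
    have hz : HasDerivAt z₀ dv t := hdiff.hasDerivAt
    have hg : HasDerivAt (fun x => z₀ x - c * x * z₀ x ^ ν)
        (dv - ((c * 1) * z₀ t ^ ν + (c * t) * ((ν : ℝ) * z₀ t ^ (ν - 1) * dv))) t := by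
      have h1 : HasDerivAt (fun x : ℝ => c * x) (c * 1) t := (hasDerivAt_id t).const_mul c
      have h2 : HasDerivAt (fun x => z₀ x ^ ν) ((ν : ℝ) * z₀ t ^ (ν - 1) * dv) t := hz.pow ν
      exact hz.sub (h1.mul h2)
    have hg0 : HasDerivAt (fun x => z₀ x - c * x * z₀ x ^ ν) 0 t := by
      have hev : (fun x => z₀ x - c * x * z₀ x ^ ν) =ᶠ[nhds t] fun _ => (1 : ℝ) := by
        filter_upwards [hI.mem_nhds ht] with x hx using (hrel x hx).symm
      exact (hasDerivAt_const t (1 : ℝ)).congr_of_eventuallyEq hev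
    have heq : dv - ((c * 1) * z₀ t ^ ν + (c * t) * ((ν : ℝ) * z₀ t ^ (ν - 1) * dv)) = 0 :=
      hg.unique hg0
    refine ⟨dv, hz, ?_⟩
    have hz1 : z₀ t ^ (ν - 1) * z₀ t = z₀ t ^ ν := by
      rw [← pow_succ]; congr 1; omega
    have hctz : c * t * z₀ t ^ ν = z₀ t - 1 := by linarith [hrel t ht]
    linear_combination (t * z₀ t) * heq + (c * (ν : ℝ) * t ^ 2 * dv) * hz1
      + (z₀ t + (ν : ℝ) * t * dv) * hctz
  -- main induction
  suffices H : ∀ j : ℕ, ∃ b : ℕ → ℝ, (∀ m, m < j → b m = 0) ∧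
      (∀ m, 3 * k + 2 * j ≤ m → b m = 0) ∧ ∀ s ∈ I, ∀ᶠ w in nhds (1 : ℝ),
      iteratedDeriv j (fun w : ℝ => w ^ ((1 : ℤ) - 2 * (k : ℤ)) * Z (w ^ (ν - 1) * s)) w
        = w ^ ((1 : ℤ) - 2 * (k : ℤ) - (j : ℤ)) * (z₀ (w ^ (ν - 1) * s) *
            ∑ m ∈ Finset.range (3 * k + 2 * j),
              b m * ((ν : ℝ) - ((ν : ℝ) - 1) * z₀ (w ^ (ν - 1) * s)) ^ (-(2 * (k : ℤ) + (m : ℤ)))) by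
    obtain ⟨b, hlow, _, hev⟩ := H n
    refine ⟨b, fun s hs => ?_⟩
    have h1 := (hev s hs).self_of_nhds
    rw [h1, one_pow, one_mul, one_zpow, one_mul]
    congr 1
    refine (Finset.sum_subset ?_ ?_).symm
    · intro m hm
      simp only [Finset.mem_Icc] at hm
      simp only [Finset.mem_range]
      omega
    · intro m hm hm'
      simp only [Finset.mem_range] at hm
      simp only [Finset.mem_Icc, not_and, not_le] at hm'
      rw [hlow m (by omega), zero_mul]
  intro j
  induction j with
  | zero =>
    refine ⟨fun m => if m < 3 * k then a m else 0, fun m hm => by omega, fun m hm => by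
      simp only [if_neg (by omega : ¬ m < 3 * k)], fun s hs => ?_⟩
    refine Filter.Eventually.of_forall fun w => ?_
    rw [iteratedDeriv_zero, hZ]
    have h30 : 3 * k + 2 * 0 = 3 * k := by ring
    rw [h30, Nat.cast_zero, sub_zero]
    congr 2
    refine Finset.sum_congr rfl fun m hm => ?_
    simp [Finset.mem_range.mp hm]
  | succ j ih =>
    obtain ⟨b, hlow, htop, hev⟩ := ih
    refine ⟨stepCoeff ν k j b, ?_, ?_, ?_⟩
    · intro m hm
      simp only [stepCoeff]
      have h1 : ((m : ℝ) - (j : ℝ)) * b m = 0 := by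
        rcases Nat.lt_or_ge m j with h | h
        · rw [hlow m h, mul_zero]
        · have : m = j := by omega
          subst this
          simp
      rw [h1]
      have h2 : (if 1 ≤ m then (1 - ((ν : ℝ) + 1) * (2 * (k : ℝ) + (m : ℝ) - 1)) * b (m - 1) else 0) = 0 := by
        split
        · rw [hlow (m - 1) (by omega), mul_zero]
        · rfl
      have h3 : (if 2 ≤ m then (ν : ℝ) * (2 * (k : ℝ) + (m : ℝ) - 2) * b (m - 2) else 0) = 0 := by
        split
        · rw [hlow (m - 2) (by omega), mul_zero]
        · rfl
      rw [h2, h3]; ring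
    · intro m hm
      simp only [stepCoeff]
      rw [htop m (by omega)]
      have h2 : (if 1 ≤ m then (1 - ((ν : ℝ) + 1) * (2 * (k : ℝ) + (m : ℝ) - 1)) * b (m - 1) else 0) = 0 := by
        split
        · rw [htop (m - 1) (by omega), mul_zero]
        · rfl
      have h3 : (if 2 ≤ m then (ν : ℝ) * (2 * (k : ℝ) + (m : ℝ) - 2) * b (m - 2) else 0) = 0 := by
        split
        · rw [htop (m - 2) (by omega), mul_zero]
        · rfl
      rw [h2, h3]; ring
    · intro s hs
      obtain ⟨E, hEsub, hEopen, h1E⟩ := mem_nhds_iff.mp (hev s hs)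
      have hVopen : IsOpen ((fun w : ℝ => w ^ (ν - 1) * s) ⁻¹' I) :=
        hI.preimage ((continuous_pow (ν - 1)).mul continuous_const)
      have h1V : (1 : ℝ) ∈ (fun w : ℝ => w ^ (ν - 1) * s) ⁻¹' I := by
        simp only [Set.mem_preimage, one_pow, one_mul]; exact hs
      have hWopen : IsOpen (E ∩ ((fun w : ℝ => w ^ (ν - 1) * s) ⁻¹' I) ∩ {w : ℝ | w ≠ 0}) :=
        (hEopen.inter hVopen).inter isOpen_ne
      have h1W : (1 : ℝ) ∈ E ∩ ((fun w : ℝ => w ^ (ν - 1) * s) ⁻¹' I) ∩ {w : ℝ | w ≠ 0} :=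
        ⟨⟨h1E, h1V⟩, one_ne_zero⟩
      filter_upwards [hWopen.mem_nhds h1W] with w hw
      obtain ⟨⟨hwE, hwV⟩, hw0⟩ := hw
      have hw0 : w ≠ 0 := hw0
      have htI : w ^ (ν - 1) * s ∈ I := hwV
      obtain ⟨dv, hzdv, htdv⟩ := hz0deriv _ htI
      have hU : (ν : ℝ) - ((ν : ℝ) - 1) * z₀ (w ^ (ν - 1) * s) ≠ 0 := hden _ htI
      -- eventual equality with extended sum
      have hsumext : ∀ x : ℝ,
          (∑ m ∈ Finset.range (3 * k + 2 * j + 2),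
            b m * ((ν : ℝ) - ((ν : ℝ) - 1) * z₀ (x ^ (ν - 1) * s)) ^ (-(2 * (k : ℤ) + (m : ℤ))))
          = ∑ m ∈ Finset.range (3 * k + 2 * j),
            b m * ((ν : ℝ) - ((ν : ℝ) - 1) * z₀ (x ^ (ν - 1) * s)) ^ (-(2 * (k : ℤ) + (m : ℤ))) := by
        intro x
        refine (Finset.sum_subset (Finset.range_subset_range.mpr (by omega)) fun m _ hm => ?_).symm
        simp only [Finset.mem_range, not_lt] at hm
        rw [htop m hm, zero_mul]
      have hEq : (iteratedDeriv j (fun w : ℝ => w ^ ((1 : ℤ) - 2 * (k : ℤ)) * Z (w ^ (ν - 1) * s)))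
          =ᶠ[nhds w] fun x : ℝ => x ^ ((1 : ℤ) - 2 * (k : ℤ) - (j : ℤ)) *
            (z₀ (x ^ (ν - 1) * s) * ∑ m ∈ Finset.range (3 * k + 2 * j + 2),
              b m * ((ν : ℝ) - ((ν : ℝ) - 1) * z₀ (x ^ (ν - 1) * s)) ^ (-(2 * (k : ℤ) + (m : ℤ)))) := by
        filter_upwards [hEopen.mem_nhds hwE] with x hx
        have hx' := hEsub hx
        rw [hx', hsumext x]
      rw [iteratedDeriv_succ]
      rw [hEq.deriv_eq]
      -- derivative of the model function
      have hΦ := phiDeriv ν k (3 * k + 2 * j + 2) z₀ b (w ^ (ν - 1) * s) dv hzdv hU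
      have hinner : HasDerivAt (fun x : ℝ => x ^ (ν - 1) * s)
          (((ν - 1 : ℕ) : ℝ) * w ^ (ν - 1 - 1) * s) w :=
        (hasDerivAt_pow (ν - 1) w).mul_const s
      have hcomp : HasDerivAt (fun x : ℝ => z₀ (x ^ (ν - 1) * s) *
            ∑ m ∈ Finset.range (3 * k + 2 * j + 2),
              b m * ((ν : ℝ) - ((ν : ℝ) - 1) * z₀ (x ^ (ν - 1) * s)) ^ (-(2 * (k : ℤ) + (m : ℤ))))
          ((∑ m ∈ Finset.range (3 * k + 2 * j + 2),
            b m * (dv * ((ν : ℝ) - ((ν : ℝ) - 1) * z₀ (w ^ (ν - 1) * s)) ^ (-(2 * (k : ℤ) + (m : ℤ)))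
              + z₀ (w ^ (ν - 1) * s) * (((-(2 * (k : ℤ) + (m : ℤ)) : ℤ) : ℝ)
                  * ((ν : ℝ) - ((ν : ℝ) - 1) * z₀ (w ^ (ν - 1) * s)) ^ (-(2 * (k : ℤ) + (m : ℤ)) - 1)
                  * (0 - ((ν : ℝ) - 1) * dv))))
            * (((ν - 1 : ℕ) : ℝ) * w ^ (ν - 1 - 1) * s)) w :=
        by have := hΦ.comp w hinner; exact this
      have hzp : HasDerivAt (fun x : ℝ => x ^ ((1 : ℤ) - 2 * (k : ℤ) - (j : ℤ)))
          ((((1 : ℤ) - 2 * (k : ℤ) - (j : ℤ) : ℤ) : ℝ) * w ^ ((1 : ℤ) - 2 * (k : ℤ) - (j : ℤ) - 1)) w :=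
        hasDerivAt_zpow _ w (Or.inl hw0)
      have hH := hzp.fun_mul hcomp
      rw [hH.deriv]
      -- now the algebraic identity
      have hkey := bracketId ν k j (z₀ (w ^ (ν - 1) * s)) dv (w ^ (ν - 1) * s) hU htdv
        (3 * k + 2 * j) b htop
      have hrange : 3 * k + 2 * (j + 1) = 3 * k + 2 * j + 2 := by ring
      rw [hrange]
      have hEexp : ((1 : ℤ) - 2 * (k : ℤ) - ((j + 1 : ℕ) : ℤ)) = (1 : ℤ) - 2 * (k : ℤ) - (j : ℤ) - 1 := by
        push_cast; ring
      rw [hEexp, ← hkey]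
      have hwE2 : w ^ ((1 : ℤ) - 2 * (k : ℤ) - (j : ℤ))
          = w ^ ((1 : ℤ) - 2 * (k : ℤ) - (j : ℤ) - 1) * w := by
        conv_lhs => rw [show (1 : ℤ) - 2 * (k : ℤ) - (j : ℤ)
          = ((1 : ℤ) - 2 * (k : ℤ) - (j : ℤ) - 1) + 1 by ring]
        rw [zpow_add_one₀ hw0]
      have hcast : ((ν - 1 : ℕ) : ℝ) = (ν : ℝ) - 1 := by
        rw [Nat.cast_sub (by omega), Nat.cast_one]
      have hpow : w ^ (ν - 1) = w ^ (ν - 1 - 1) * w := by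
        rw [← pow_succ]; congr 1; omega
      rw [hwE2, hcast, hpow]
      push_cast
      ring
end

section
/- Let ν ≥ 1 and g ≥ 0 be integers and let λ be a partition of 2g+1 with at most ν+1 parts. Let η = (η_1, …, η_{ν+1}) with η_i = 2ν + 2 − 2i, and let S be the set of strictly decreasing (ν+1)-tuples of integers μ = (μ_1, …, μ_{ν+1}) with ν + 2 − i ≤ μ_i ≤ 2ν + 1 − i for each i (i.e., (ν+1, ν, …, 2, 1) ⊆ μ ⊆ (2ν, 2ν−1, …, ν) componentwise). Then Σ_{μ ∈ S} [ m_λ(μ_1 − η_1, …, μ_{ν+1} − η_{ν+1}) − m_λ(μ_1 − η_1 − 1, …, μ_{ν+1} − η_{ν+1} − 1) ] = Σ_{μ ∈ S} 2·m_λ(μ_1 − η_1, …, μ_{ν+1} − η_{ν+1}). -/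
/-!
The reflection `μ ↦ μ*`, `μ*_j = 2ν + 1 − μ_{ν+2−j}`, is an involution of `S`, and it satisfies
`μ* − η = −ρ(μ − η − 1)`, where `ρ` reverses the order of the coordinates. Since `m_λ` is symmetric
and homogeneous of odd degree `2g + 1`, this gives `m_λ(μ* − η) = −m_λ(μ − η − 1)`, so summing over
`S` yields `Σ m_λ(μ − η − 1) = −Σ m_λ(μ − η)`.
-/

/-- The monomial symmetric polynomial associated to the exponent list `L`
(of length `n`), evaluated at integers `x : Fin n → ℤ`: the sum, over the set of
*distinct* tuples obtained by permuting the entries of `L`, of the corresponding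
monomials `∏ i, x i ^ e i`. -/
def mSym (n : ℕ) (L : List ℕ) (x : Fin n → ℤ) : ℤ :=
  ∑ e ∈ Finset.image
      (fun σ : Equiv.Perm (Fin n) => fun i : Fin n => L.getD ((σ i) : ℕ) 0)
      Finset.univ,
    ∏ i : Fin n, x i ^ e i

/-- The set `S` of strictly decreasing `(ν+1)`-tuples of integers
`μ = (μ_1, …, μ_{ν+1})` with `ν + 2 − i ≤ μ_i ≤ 2ν + 1 − i` (1-indexed), i.e.
`(ν+1, ν, …, 2, 1) ⊆ μ ⊆ (2ν, 2ν−1, …, ν)` componentwise. -/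
noncomputable def tupleSet (ν : ℕ) : Finset (Fin (ν + 1) → ℤ) :=
  (Fintype.piFinset fun i : Fin (ν + 1) =>
      Finset.Icc ((ν : ℤ) + 1 - (i : ℕ)) (2 * (ν : ℤ) - (i : ℕ))).filter
    fun μ => ∀ i j : Fin (ν + 1), i < j → μ j < μ i

/-- The parts of the partition `P`, padded with zeros to a list of length `ν+1`. -/
def paddedList (ν : ℕ) (P : Multiset ℕ) : List ℕ :=
  Multiset.sort P (· ≤ ·) ++ List.replicate (ν + 1 - Multiset.card P) 0

section MonomialSymmetric

variable {n : ℕ} {L : List ℕ}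

lemma mSym_comp_perm (x : Fin n → ℤ) (τ : Equiv.Perm (Fin n)) :
    mSym n L (x ∘ τ) = mSym n L x := by
  unfold mSym
  refine Finset.sum_nbij' (fun e => e ∘ ⇑τ⁻¹) (fun e => e ∘ ⇑τ) ?_ ?_ ?_ ?_ ?_
  · intro e he
    obtain ⟨σ, -, rfl⟩ := Finset.mem_image.mp he
    exact Finset.mem_image.mpr ⟨σ * τ⁻¹, Finset.mem_univ _, rfl⟩
  · intro e he
    obtain ⟨σ, -, rfl⟩ := Finset.mem_image.mp he
    exact Finset.mem_image.mpr ⟨σ * τ, Finset.mem_univ _, rfl⟩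
  · intro e _; funext i; simp
  · intro e _; funext i; simp
  · intro e _
    simpa using Equiv.prod_comp τ (fun i => x i ^ e (τ⁻¹ i))

lemma sum_getD_perm (hL : L.length = n) (σ : Equiv.Perm (Fin n)) :
    ∑ i : Fin n, L.getD (σ i : ℕ) 0 = L.sum := by
  subst hL
  rw [Equiv.sum_comp σ (fun i => L.getD (i : ℕ) 0)]
  simp_rw [fun i : Fin L.length => List.getD_eq_getElem L 0 i.isLt]
  rw [← Fin.sum_ofFn, List.ofFn_getElem]

lemma mSym_const_mul (hL : L.length = n) (c : ℤ) (x : Fin n → ℤ) :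
    mSym n L (fun i => c * x i) = c ^ L.sum * mSym n L x := by
  unfold mSym
  rw [Finset.mul_sum]
  refine Finset.sum_congr rfl fun e he => ?_
  obtain ⟨σ, -, rfl⟩ := Finset.mem_image.mp he
  simp_rw [mul_pow, Finset.prod_mul_distrib, Finset.prod_pow_eq_pow_sum, sum_getD_perm hL]

lemma mSym_neg_of_odd (hL : L.length = n) (hodd : Odd L.sum) (x : Fin n → ℤ) :
    mSym n L (fun i => -x i) = -mSym n L x := by
  simpa [hodd.neg_one_pow] using mSym_const_mul hL (-1) x

end MonomialSymmetric

lemma paddedList_length {ν : ℕ} {P : Multiset ℕ} (hP : Multiset.card P ≤ ν + 1) :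
    (paddedList ν P).length = ν + 1 := by
  simp only [paddedList, List.length_append, List.length_replicate, Multiset.length_sort]
  omega

lemma paddedList_sum (ν : ℕ) (P : Multiset ℕ) : (paddedList ν P).sum = P.sum := by
  rw [paddedList, List.sum_append, List.sum_replicate, smul_zero, add_zero, ← Multiset.sum_coe,
    Multiset.sort_eq]

section Reflection

variable {ν : ℕ}

def reflectTuple (ν : ℕ) (μ : Fin (ν + 1) → ℤ) : Fin (ν + 1) → ℤ :=
  fun j => 2 * (ν : ℤ) + 1 - μ (Fin.rev j)

lemma reflectTuple_reflectTuple (μ : Fin (ν + 1) → ℤ) :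
    reflectTuple ν (reflectTuple ν μ) = μ := by
  funext j; simp [reflectTuple]

lemma cast_val_rev (j : Fin (ν + 1)) : ((Fin.rev j : ℕ) : ℤ) = ν - (j : ℕ) := by
  rw [Fin.val_rev]
  omega

lemma reflectTuple_mem_tupleSet {μ : Fin (ν + 1) → ℤ} (hμ : μ ∈ tupleSet ν) :
    reflectTuple ν μ ∈ tupleSet ν := by
  simp only [tupleSet, reflectTuple, Finset.mem_filter, Fintype.mem_piFinset,
    Finset.mem_Icc] at hμ ⊢
  obtain ⟨hbox, hdec⟩ := hμ
  refine ⟨fun j => ?_, fun i j hij => ?_⟩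
  · have h := hbox (Fin.rev j)
    rw [cast_val_rev] at h
    constructor <;> linarith [h.1, h.2]
  · linarith [hdec _ _ (Fin.rev_lt_rev.mpr hij)]

lemma sum_tupleSet_sub_one_eq_neg (F : (Fin (ν + 1) → ℤ) → ℤ)
    (hF : ∀ x, F (fun j => -x (Fin.rev j)) = -F x) :
    ∑ μ ∈ tupleSet ν, F (fun i => μ i - (2 * (ν : ℤ) - 2 * ((i : ℕ) : ℤ)) - 1)
      = -∑ μ ∈ tupleSet ν, F (fun i => μ i - (2 * (ν : ℤ) - 2 * ((i : ℕ) : ℤ))) := by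
  rw [← Finset.sum_neg_distrib]
  refine Finset.sum_nbij' (reflectTuple ν) (reflectTuple ν)
    (fun _ => reflectTuple_mem_tupleSet) (fun _ => reflectTuple_mem_tupleSet)
    (fun μ _ => reflectTuple_reflectTuple μ) (fun μ _ => reflectTuple_reflectTuple μ) ?_
  intro μ _
  rw [← hF]
  congr 1
  funext j
  simp only [reflectTuple, cast_val_rev, Fin.rev_rev]
  ring

end Reflection

theorem monomial_symmetric_sum_identity_general
    (ν g : ℕ)
    (lam : Nat.Partition (2 * g + 1)) (hparts : Multiset.card lam.parts ≤ ν + 1) :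
    ∑ μ ∈ tupleSet ν,
        (mSym (ν + 1) (paddedList ν lam.parts)
            (fun i => μ i - (2 * (ν : ℤ) - 2 * ((i : ℕ) : ℤ)))
          - mSym (ν + 1) (paddedList ν lam.parts)
            (fun i => μ i - (2 * (ν : ℤ) - 2 * ((i : ℕ) : ℤ)) - 1))
      = ∑ μ ∈ tupleSet ν,
          2 * mSym (ν + 1) (paddedList ν lam.parts)
            (fun i => μ i - (2 * (ν : ℤ) - 2 * ((i : ℕ) : ℤ))) := by
  have hodd : Odd (paddedList ν lam.parts).sum := by
    rw [paddedList_sum, lam.parts_sum]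
    exact odd_two_mul_add_one g
  have hF (x : Fin (ν + 1) → ℤ) :
      mSym (ν + 1) (paddedList ν lam.parts) (fun j => -x (Fin.rev j))
        = -mSym (ν + 1) (paddedList ν lam.parts) x := by
    rw [← mSym_neg_of_odd (paddedList_length hparts) hodd]
    exact mSym_comp_perm (fun j => -x j) Fin.revPerm
  rw [Finset.sum_sub_distrib, sum_tupleSet_sub_one_eq_neg _ hF, ← Finset.mul_sum]
  ring

/-- Let `ν ≥ 1`, `g ≥ 0`, and let `λ` be a partition of `2g+1`
with at most `ν+1` parts.  With `η_i = 2ν + 2 − 2i` (1-indexed) and `S` as above,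
`Σ_{μ ∈ S} [m_λ(μ − η) − m_λ(μ − η − (1,…,1))] = Σ_{μ ∈ S} 2·m_λ(μ − η)`. -/
theorem monomial_symmetric_sum_identity
    (ν g : ℕ) (hν : 1 ≤ ν)
    (lam : Nat.Partition (2 * g + 1)) (hparts : Multiset.card lam.parts ≤ ν + 1) :
    ∑ μ ∈ tupleSet ν,
        (mSym (ν + 1) (paddedList ν lam.parts)
            (fun i => μ i - (2 * (ν : ℤ) - 2 * ((i : ℕ) : ℤ)))
          - mSym (ν + 1) (paddedList ν lam.parts)
            (fun i => μ i - (2 * (ν : ℤ) - 2 * ((i : ℕ) : ℤ)) - 1))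
      = ∑ μ ∈ tupleSet ν,
          2 * mSym (ν + 1) (paddedList ν lam.parts)
            (fun i => μ i - (2 * (ν : ℤ) - 2 * ((i : ℕ) : ℤ))) :=
  monomial_symmetric_sum_identity_general ν g lam hparts
end

section
/- For every integer ν ≥ 1, letting S be the set of strictly decreasing (ν+1)-tuples of integers μ = (μ_1, …, μ_{ν+1}) with ν + 2 − i ≤ μ_i ≤ 2ν + 1 − i for each i, one has Σ_{μ ∈ S} 2·Σ_{i=1}^{ν+1} (μ_i − (2ν + 2 − 2i))³ = 2ν²·binom(2ν−1, ν−1). (This evaluates the continuum-Toda coefficient d_{(3)}^{(ν,1)} to be ν·c_ν.) -/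
open Finset

lemma Finset.sum_powersetCard_succ_insert {α β : Type*} [DecidableEq α] [AddCommMonoid β]
    {a : α} {s : Finset α} (ha : a ∉ s) (k : ℕ) (f : Finset α → β) :
    ∑ t ∈ powersetCard (k + 1) (insert a s), f t =
      ∑ t ∈ powersetCard (k + 1) s, f t + ∑ t ∈ powersetCard k s, f (insert a t) := by
  rw [powersetCard_succ_insert ha, sum_union, sum_image]
  · exact insert_erase_invOn.2.injOn.mono fun t ht ↦ notMem_mono (mem_powersetCard.1 ht).1 ha
  · aesop (add simp [disjoint_left, insert_subset_iff, mem_powersetCard])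

lemma Finset.card_filter_lt_orderEmbOfFin {α : Type*} [LinearOrder α] (s : Finset α) {k : ℕ}
    (h : #s = k) (i : Fin k) : #{x ∈ s | x < s.orderEmbOfFin h i} = i := by
  set e := s.orderEmbOfFin h
  have : {x ∈ s | x < e i} = (Iio i).map e.toEmbedding := by
    ext x
    simp only [mem_filter, mem_map, mem_Iio]
    constructor
    · rintro ⟨hx, hlt⟩
      obtain ⟨j, rfl⟩ : x ∈ Set.range e := by rwa [range_orderEmbOfFin]
      exact ⟨j, e.lt_iff_lt.1 hlt, rfl⟩
    · rintro ⟨j, hj, rfl⟩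
      exact ⟨orderEmbOfFin_mem s h j, e.strictMono hj⟩
  rw [this, card_map, Fin.card_Iio]

lemma Finset.sum_rank_eq_sum_orderEmbOfFin {α β : Type*} [LinearOrder α] [AddCommMonoid β]
    (s : Finset α) {k : ℕ} (h : #s = k) (g : ℕ → α → β) :
    ∑ p ∈ s, g #{x ∈ s | x < p} p = ∑ i : Fin k, g i (s.orderEmbOfFin h i) := by
  calc ∑ p ∈ s, g #{x ∈ s | x < p} p
      = ∑ p ∈ univ.image (s.orderEmbOfFin h), g #{x ∈ s | x < p} p := by
        rw [image_orderEmbOfFin_univ]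
    _ = _ := by
        rw [sum_image fun i _ j _ hij ↦ (s.orderEmbOfFin h).injective hij]
        simp only [card_filter_lt_orderEmbOfFin]

lemma StrictMono.add_sub_le_apply {k : ℕ} {f : Fin k → ℕ} (hf : StrictMono f) {i j : Fin k}
    (hij : i ≤ j) : f i + ((j : ℕ) - i) ≤ f j := by
  have := card_le_card_of_injOn f (s := Icc i j) (t := Icc (f i) (f j))
    (fun x hx ↦ by
      simp only [coe_Icc, Set.mem_Icc] at hx ⊢
      exact ⟨hf.monotone hx.1, hf.monotone hx.2⟩)
    hf.injective.injOn
  simp only [Fin.card_Icc, Nat.card_Icc] at this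
  have := hf.monotone hij
  omega

lemma natCast_sub_mul_choose (n k : ℕ) :
    ((n : ℤ) - k) * n.choose k = (k + 1) * n.choose (k + 1) := by
  rcases le_or_gt k n with hk | hk
  · have := congrArg (Nat.cast : ℕ → ℤ) (Nat.choose_succ_right_eq n k)
    push_cast [hk] at this
    linarith
  · rw [Nat.choose_eq_zero_of_lt hk, Nat.choose_eq_zero_of_lt (by omega)]
    simp

lemma natCast_choose_succ_succ (n k : ℕ) :
    ((n + 1).choose (k + 1) : ℤ) = n.choose k + n.choose (k + 1) := by
  rw [Nat.choose_succ_succ, Nat.cast_add]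

def rankCubeSum (n k : ℕ) : ℤ :=
  ∑ T ∈ powersetCard k (range n), ∑ p ∈ T, (2 * #{q ∈ T | q < p} - p : ℤ) ^ 3

lemma rankCubeSum_zero_right (n : ℕ) : rankCubeSum n 0 = 0 := by
  simp [rankCubeSum]

lemma rankCubeSum_zero_succ (k : ℕ) : rankCubeSum 0 (k + 1) = 0 := by
  rw [rankCubeSum, powersetCard_eq_empty.2 (by simp), sum_empty]

lemma sum_rankCube_insert_of_lt {n : ℕ} {T : Finset ℕ} (hT : ∀ q ∈ T, q < n) :
    ∑ p ∈ insert n T, (2 * #{q ∈ insert n T | q < p} - p : ℤ) ^ 3 =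
      ∑ p ∈ T, (2 * #{q ∈ T | q < p} - p : ℤ) ^ 3 + (2 * #T - n) ^ 3 := by
  have hn : n ∉ T := fun h ↦ (hT n h).false
  rw [sum_insert hn, add_comm, filter_insert, if_neg (lt_irrefl n), filter_true_of_mem hT]
  congr 1
  refine sum_congr rfl fun p hp ↦ ?_
  rw [filter_insert, if_neg (hT p hp).asymm]

lemma rankCubeSum_succ_succ (n k : ℕ) :
    rankCubeSum (n + 1) (k + 1) =
      rankCubeSum n (k + 1) + rankCubeSum n k + (2 * k - n) ^ 3 * n.choose k := by
  rw [rankCubeSum, range_add_one, sum_powersetCard_succ_insert notMem_range_self,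
    add_assoc, rankCubeSum, rankCubeSum]
  congr 1
  rw [sum_congr rfl fun T hT ↦ by
      rw [sum_rankCube_insert_of_lt fun q hq ↦ mem_range.1 ((mem_powersetCard.1 hT).1 hq),
        (mem_powersetCard.1 hT).2],
    sum_add_distrib, sum_const, card_powersetCard, card_range, nsmul_eq_mul, mul_comm]

-- The ansatz `∑_{j ≤ 3} c_j(k) C(n, k + j)` with `c_j` polynomial, solved against
-- the recurrence `rankCubeSum_succ_succ`.
def rankCubeSumClosedForm (n k : ℕ) : ℤ :=
  (k ^ 2 * (k - 1) ^ 2) * n.choose k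
  + (k * (-3 * k ^ 3 + 6 * k ^ 2 + k - 8)) * n.choose (k + 1)
  + (k * (3 * k ^ 3 + 2 * k ^ 2 - 15 * k - 14)) * n.choose (k + 2)
  - (k * (k + 1) * (k + 2) * (k + 3)) * n.choose (k + 3)

lemma rankCubeSumClosedForm_zero_right (n : ℕ) : rankCubeSumClosedForm n 0 = 0 := by
  simp [rankCubeSumClosedForm]

lemma rankCubeSumClosedForm_zero_succ (k : ℕ) : rankCubeSumClosedForm 0 (k + 1) = 0 := by
  simp [rankCubeSumClosedForm]

lemma rankCubeSumClosedForm_succ_succ (n k : ℕ) :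
    rankCubeSumClosedForm (n + 1) (k + 1) =
      rankCubeSumClosedForm n (k + 1) + rankCubeSumClosedForm n k
        + 4 * (2 * k - n) ^ 3 * n.choose k := by
  have h0 := natCast_sub_mul_choose n k
  have h1 := natCast_sub_mul_choose n (k + 1)
  have h2 := natCast_sub_mul_choose n (k + 2)
  simp only [rankCubeSumClosedForm, natCast_choose_succ_succ, Nat.cast_add, Nat.cast_one,
    Nat.cast_ofNat, add_assoc, Nat.reduceAdd] at h0 h1 h2 ⊢
  linear_combination (28 * (k : ℤ) ^ 2 - 20 * n * k + 4 * n ^ 2) * h0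
    + (-16 * (k : ℤ) ^ 2 + 4 * n * k - 12 * k + 4 * n + 4) * h1
    + (4 * (k : ℤ) ^ 2 + 12 * k + 8) * h2

theorem four_mul_rankCubeSum : ∀ n k : ℕ, 4 * rankCubeSum n k = rankCubeSumClosedForm n k
  | _, 0 => by rw [rankCubeSum_zero_right, rankCubeSumClosedForm_zero_right, mul_zero]
  | 0, k + 1 => by rw [rankCubeSum_zero_succ, rankCubeSumClosedForm_zero_succ, mul_zero]
  | n + 1, k + 1 => by
    rw [rankCubeSum_succ_succ, rankCubeSumClosedForm_succ_succ, ← four_mul_rankCubeSum n k,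
      ← four_mul_rankCubeSum n (k + 1)]
    ring

lemma rankCubeSumClosedForm_central (m : ℕ) :
    rankCubeSumClosedForm (2 * m + 2) (m + 2) = 4 * (m + 1) ^ 2 * (2 * m + 1).choose m := by
  have h0 : ((2 * m + 2 : ℕ) : ℤ) * (2 * m + 1).choose m =
      (2 * m + 2).choose (m + 2) * (m + 2) := by
    rw [← Nat.choose_symm_half]
    exact_mod_cast Nat.add_one_mul_choose_eq (2 * m + 1) (m + 1)
  have h1 := natCast_sub_mul_choose (2 * m + 2) (m + 2)
  have h2 := natCast_sub_mul_choose (2 * m + 2) (m + 3)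
  have h3 := natCast_sub_mul_choose (2 * m + 2) (m + 4)
  simp only [rankCubeSumClosedForm, Nat.cast_add, Nat.cast_mul, Nat.cast_ofNat, add_assoc,
    Nat.reduceAdd] at h0 h1 h2 h3 ⊢
  linear_combination (-2 * ((m : ℤ) + 1)) * h0 + ((m : ℤ) + 1) * (m + 2) * (m + 3) * h1
    - ((m : ℤ) + 2) * (m + 3) * (2 * m + 1) * h2 + ((m : ℤ) + 2) * (m + 3) * (m + 4) * h3

section TupleSet

variable {ν : ℕ}

lemma mem_tupleSet {μ : Fin (ν + 1) → ℤ} :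
    μ ∈ tupleSet ν ↔ (∀ i : Fin (ν + 1), ν + 1 - (i : ℕ) ≤ μ i ∧ μ i ≤ 2 * ν - (i : ℕ)) ∧
      ∀ i j : Fin (ν + 1), i < j → μ j < μ i := by
  simp [tupleSet]

lemma two_mul_sub_orderEmbOfFin_mem_tupleSet {T : Finset ℕ} (hT : T ⊆ range (2 * ν))
    (h : #T = ν + 1) : (fun i ↦ 2 * ν - (T.orderEmbOfFin h i : ℤ)) ∈ tupleSet ν := by
  set e := T.orderEmbOfFin h
  refine mem_tupleSet.2 ⟨fun i ↦ ?_, fun i j hij ↦ by simpa using e.strictMono hij⟩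
  have hlow := e.strictMono.add_sub_le_apply (Fin.zero_le i)
  have hhigh := e.strictMono.add_sub_le_apply (Fin.le_last i)
  have hlast : e (Fin.last ν) < 2 * ν := mem_range.1 (hT (orderEmbOfFin_mem T h _))
  simp only [Fin.coe_ofNat_eq_mod, Nat.zero_mod, Nat.sub_zero, Fin.val_last] at hlow hhigh
  omega

variable {μ : Fin (ν + 1) → ℤ}

lemma natCast_toNat_two_mul_sub (hμ : μ ∈ tupleSet ν) (i : Fin (ν + 1)) :
    ((2 * ν - μ i).toNat : ℤ) = 2 * ν - μ i :=
  Int.toNat_of_nonneg (by have := ((mem_tupleSet.1 hμ).1 i).2; omega)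

lemma strictMono_toNat_two_mul_sub (hμ : μ ∈ tupleSet ν) :
    StrictMono fun i ↦ (2 * ν - μ i).toNat := fun i j hij ↦ by
  have := (mem_tupleSet.1 hμ).2 i j hij
  have := natCast_toNat_two_mul_sub hμ i
  have := natCast_toNat_two_mul_sub hμ j
  dsimp only
  omega

lemma image_toNat_two_mul_sub_mem_powersetCard (hμ : μ ∈ tupleSet ν) :
    univ.image (fun i ↦ (2 * ν - μ i).toNat) ∈ powersetCard (ν + 1) (range (2 * ν)) := by
  refine mem_powersetCard.2 ⟨fun q hq ↦ ?_, ?_⟩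
  · obtain ⟨i, -, rfl⟩ := mem_image.1 hq
    have := natCast_toNat_two_mul_sub hμ i
    have := ((mem_tupleSet.1 hμ).1 i).1
    rw [mem_range]
    omega
  · rw [card_image_of_injective _ (strictMono_toNat_two_mul_sub hμ).injective, card_univ,
      Fintype.card_fin]

end TupleSet

theorem sum_tupleSet_eq_rankCubeSum (ν : ℕ) :
    ∑ μ ∈ tupleSet ν, ∑ i : Fin (ν + 1), (μ i - (2 * (ν : ℤ) - 2 * ((i : ℕ) : ℤ))) ^ 3
      = rankCubeSum (2 * ν) (ν + 1) := by
  symm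
  refine sum_bij' (fun T hT i ↦ 2 * ν - (T.orderEmbOfFin (mem_powersetCard.1 hT).2 i : ℤ))
    (fun μ _ ↦ univ.image fun i ↦ (2 * ν - μ i).toNat)
    (fun T hT ↦ two_mul_sub_orderEmbOfFin_mem_tupleSet (mem_powersetCard.1 hT).1 _)
    (fun μ hμ ↦ image_toNat_two_mul_sub_mem_powersetCard hμ) (fun T hT ↦ ?_) (fun μ hμ ↦ ?_)
    (fun T hT ↦ ?_)
  · simp only [sub_sub_cancel, Int.toNat_natCast, image_orderEmbOfFin_univ]
  · have hcard := (mem_powersetCard.1 (image_toNat_two_mul_sub_mem_powersetCard hμ)).2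
    have hq := orderEmbOfFin_unique hcard (fun i ↦ mem_image_of_mem _ (mem_univ i))
      (strictMono_toNat_two_mul_sub hμ)
    funext i
    rw [← congrFun hq i, natCast_toNat_two_mul_sub hμ, sub_sub_cancel]
  · rw [sum_rank_eq_sum_orderEmbOfFin T (mem_powersetCard.1 hT).2
      fun r p ↦ (2 * (r : ℤ) - p) ^ 3]
    exact sum_congr rfl fun i _ ↦ by ring

/-- For every `ν ≥ 1`, with `η_i = 2ν + 2 − 2i` (1-indexed),
`Σ_{μ ∈ S} 2·Σ_{i=1}^{ν+1} (μ_i − η_i)³ = 2ν²·binom(2ν−1, ν−1)`; this evaluates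
the continuum-Toda coefficient `d_{(3)}^{(ν,1)}` to `ν·c_ν`. -/
theorem d_coefficient_partition_three
    (ν : ℕ) (hν : 1 ≤ ν) :
    ∑ μ ∈ tupleSet ν,
        2 * ∑ i : Fin (ν + 1), (μ i - (2 * (ν : ℤ) - 2 * ((i : ℕ) : ℤ))) ^ 3
      = 2 * (ν : ℤ) ^ 2 * (Nat.choose (2 * ν - 1) (ν - 1) : ℤ) := by
  obtain ⟨m, rfl⟩ : ∃ m, ν = m + 1 := ⟨ν - 1, by omega⟩
  rw [← mul_sum, sum_tupleSet_eq_rankCubeSum, show 2 * (m + 1) = 2 * m + 2 by ring,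
    show 2 * m + 2 - 1 = 2 * m + 1 by omega, Nat.add_sub_cancel]
  have hG := four_mul_rankCubeSum (2 * m + 2) (m + 2)
  rw [rankCubeSumClosedForm_central] at hG
  push_cast
  linarith
end

section
/- Define real sequences (α_g)_{g≥0} by α_0 = 1 and α_{g+1} = ((25g² − 1)/(8√6))·α_g − (1/2)·Σ_{m=1}^{g} α_m·α_{g+1−m} (the asymptotic coefficients of Painlevé I), and (b_g)_{g≥1} by b_1 = 2/3 and b_{g+1} = (4/3)(25g² − 1)·b_g + Σ_{m=1}^{g} b_m·b_{g+1−m} (the ν = 2 case of the leading-pole recursion). Then for every g ≥ 1, b_g = −2^{5g−1}·(2/3)^{g/2}·α_g. -/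
/-!
Both sequences solve a quadratic recursion of the same shape
`u (g + 1) = p g * u g + c * ∑ u m * u (g + 1 - m)`, and rescaling `u g ↦ λ κ ^ g u g` only
multiplies `p` by `κ` and divides `c` by `λ`. With `κ = 32 √(2/3)` and `λ = -1/2` the Painlevé
recursion (`c = -1/2`, `8√6 = 24 √(2/3)`) becomes the leading-pole recursion (`c = 1`); the two
sequences then agree at `g = 1`, hence everywhere by strong induction.
-/

open Finset

def IsQuadraticRecursive {K : Type*} [CommRing K] (p : ℕ → K) (c : K) (u : ℕ → K) : Prop :=
  ∀ g, 1 ≤ g → u (g + 1) = p g * u g + c * ∑ m ∈ Icc 1 g, u m * u (g + 1 - m)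

namespace IsQuadraticRecursive

variable {K : Type*}

theorem eq_of_apply_one_eq [CommRing K] {p : ℕ → K} {c : K} {u v : ℕ → K}
    (hu : IsQuadraticRecursive p c u) (hv : IsQuadraticRecursive p c v) (h1 : u 1 = v 1) :
    ∀ g, 1 ≤ g → u g = v g := by
  intro g
  induction g using Nat.strong_induction_on with
  | _ g ih =>
    intro hg
    obtain _ | _ | n := g
    · omega
    · exact h1
    · have hsum : ∑ m ∈ Icc 1 (n + 1), u m * u (n + 2 - m)
          = ∑ m ∈ Icc 1 (n + 1), v m * v (n + 2 - m) := by
        refine sum_congr rfl fun m hm => ?_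
        rw [mem_Icc] at hm
        rw [ih m (by omega) hm.1, ih (n + 2 - m) (by omega) (by omega)]
      rw [hu (n + 1) (by omega), hv (n + 1) (by omega), ih (n + 1) (by omega) (by omega), hsum]

theorem rescale [Field K] {p : ℕ → K} {c : K} {u : ℕ → K} (hu : IsQuadraticRecursive p c u)
    {l : K} (hl : l ≠ 0) (κ : K) :
    IsQuadraticRecursive (fun g => κ * p g) (c / l) (fun g => l * κ ^ g * u g) := by
  intro g hg
  have hsum : ∑ m ∈ Icc 1 g, l * κ ^ m * u m * (l * κ ^ (g + 1 - m) * u (g + 1 - m))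
      = l ^ 2 * κ ^ (g + 1) * ∑ m ∈ Icc 1 g, u m * u (g + 1 - m) := by
    rw [mul_sum]
    refine sum_congr rfl fun m hm => ?_
    have hpow : κ ^ m * κ ^ (g + 1 - m) = κ ^ (g + 1) := by
      rw [← pow_add]; congr 1; rw [mem_Icc] at hm; omega
    rw [← hpow]; ring
  beta_reduce
  rw [hsum, hu g hg]
  field_simp
  ring

end IsQuadraticRecursive

/-- Let `(α_g)_{g≥0}` be the Painlevé I asymptotic coefficients,
`α_0 = 1` and `α_{g+1} = ((25g² − 1)/(8√6))·α_g − (1/2)·Σ_{m=1}^{g} α_m·α_{g+1−m}`,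
and let `(b_g)_{g≥1}` be the `ν = 2` leading-pole coefficients, `b_1 = 2/3` and
`b_{g+1} = (4/3)(25g² − 1)·b_g + Σ_{m=1}^{g} b_m·b_{g+1−m}`.  Then for every
`g ≥ 1`, `b_g = −2^{5g−1}·(2/3)^{g/2}·α_g`. -/
theorem leading_pole_coefficients_eq_painleve_coefficients
    (α : ℕ → ℝ) (hα0 : α 0 = 1)
    (hαrec : ∀ g : ℕ, α (g + 1) =
      ((25 * (g : ℝ) ^ 2 - 1) / (8 * Real.sqrt 6)) * α g
        - (1 / 2) * ∑ m ∈ Finset.Icc 1 g, α m * α (g + 1 - m))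
    (b : ℕ → ℝ) (hb1 : b 1 = 2 / 3)
    (hbrec : ∀ g : ℕ, 1 ≤ g → b (g + 1) =
      (4 / 3) * (25 * (g : ℝ) ^ 2 - 1) * b g
        + ∑ m ∈ Finset.Icc 1 g, b m * b (g + 1 - m)) :
    ∀ g : ℕ, 1 ≤ g →
      b g = -(2 : ℝ) ^ (5 * g - 1) * Real.sqrt (2 / 3) ^ g * α g := by
  set s := Real.sqrt (2 / 3)
  have hs : s ≠ 0 := (Real.sqrt_pos.mpr (by norm_num)).ne'
  have h6 : Real.sqrt 6 = 3 * s := by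
    rw [show (6 : ℝ) = 3 ^ 2 * (2 / 3) by norm_num, Real.sqrt_mul (by positivity),
      Real.sqrt_sq (by norm_num)]
  have hα : IsQuadraticRecursive (fun g => (25 * (g : ℝ) ^ 2 - 1) / (8 * Real.sqrt 6)) (-1 / 2) α :=
    fun g _ => by rw [hαrec g]; ring
  have hα1 : α 1 = -1 / (8 * Real.sqrt 6) := by
    rw [hαrec 0, hα0]; simp
  have hb : IsQuadraticRecursive (fun g => 4 / 3 * (25 * (g : ℝ) ^ 2 - 1)) 1 b :=
    fun g hg => by rw [hbrec g hg, one_mul]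
  have hscaled : IsQuadraticRecursive (fun g => 4 / 3 * (25 * (g : ℝ) ^ 2 - 1)) 1
      (fun g => -1 / 2 * (32 * s) ^ g * α g) := by
    have hp : (fun g : ℕ => 32 * s * ((25 * (g : ℝ) ^ 2 - 1) / (8 * Real.sqrt 6)))
        = fun g : ℕ => 4 / 3 * (25 * (g : ℝ) ^ 2 - 1) := by
      funext g; rw [h6]; field_simp; ring
    have := hα.rescale (l := -1 / 2) (by norm_num) (32 * s)
    rwa [hp, div_self (by norm_num)] at this
  intro g hg
  rw [hb.eq_of_apply_one_eq hscaled (by rw [hb1, hα1, h6]; field_simp; ring) g hg]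
  obtain ⟨n, rfl⟩ := Nat.exists_eq_add_of_le' hg
  rw [show 5 * (n + 1) - 1 = 5 * n + 4 by omega, mul_pow, pow_succ (32 : ℝ),
    show (32 : ℝ) ^ n = 2 ^ (5 * n) by rw [pow_mul]; norm_num, pow_add]
  ring
end

section
/- Let ν ≥ 1 be an integer and z ∈ [0,1] a real number. Define, for η ∈ [−1,1], ψ_z(η) = (2/π)·[ z + (1−z)·( (2η)^{2ν−2}/binom(2ν−1, ν−1) + Σ_{j=1}^{ν−1} (2·binom(2j−1, j−1)/binom(2ν−1, ν−1))·(2η)^{2ν−2−2j} ) ]·√(1−η²). Then ψ_z(η) ≥ 0 for all η ∈ [−1,1], and ∫_{−1}^{1} ψ_z(η) dη = 1; that is, ψ_z is the density of a probability measure on [−1,1] (the rescaled equilibrium measure, a convex combination of the semicircle density at z = 1 and the monomial-weight equilibrium density at z = 0). -/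
/-!
Substituting `η = sin θ` and using Wallis' formula shows that the semicircle law has Catalan
moments: `∫_{-1}^{1} (2η)^{2k} √(1-η²) dη = (π/2) catalan k`. Hence `ψ_z` integrates to
`z + (1 - z) (∑_{j ≤ n} centralBinom j · catalan (n - j)) / binom(2n+1, n)` with `ν = n + 1`,
and the convolution `∑_{j ≤ n} centralBinom j · catalan (n - j) = binom(2n+1, n)` (proved by
telescoping) makes this `1`. Nonnegativity is clear, since only even powers of `2η` occur.
-/

open Real Finset intervalIntegral

namespace Nat

theorem two_mul_choose_two_mul_add_one (n : ℕ) :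
    2 * (2 * n + 1).choose n = centralBinom (n + 1) := by
  rw [centralBinom_eq_two_mul_choose, show 2 * (n + 1) = 2 * n + 1 + 1 by ring,
    choose_succ_succ, choose_symm_half]
  ring

theorem succ_mul_choose_two_mul_add_one (n : ℕ) :
    (n + 1) * (2 * n + 1).choose n = (2 * n + 1) * centralBinom n := by
  have h := succ_mul_centralBinom_succ n
  rw [← two_mul_choose_two_mul_add_one] at h
  linarith

/-- Gosper's certificate for the convolution below: the summand, times `n + 1 = j + m + 2`, is the
difference of `G j = j (2 (n - j) + 1) centralBinom j catalan (n - j)` at `j + 1` and at `j`. -/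
theorem centralBinom_mul_catalan_telescope (j m : ℕ) :
    ((j + m + 2) * (centralBinom j * catalan (m + 1)) : ℤ) =
      (j + 1) * (2 * m + 1) * centralBinom (j + 1) * catalan m
        - j * (2 * m + 3) * centralBinom j * catalan (m + 1) := by
  have hb : ((j + 1) * centralBinom (j + 1) : ℤ) = 2 * (2 * j + 1) * centralBinom j := by
    exact_mod_cast succ_mul_centralBinom_succ j
  have hc : ((m + 2) * catalan (m + 1) : ℤ) = 2 * (2 * m + 1) * catalan m := by
    have h₁ : ((m + 2) * catalan (m + 1) : ℤ) = centralBinom (m + 1) := by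
      exact_mod_cast succ_mul_catalan_eq_centralBinom (m + 1)
    have h₂ : ((m + 1) * catalan m : ℤ) = centralBinom m := by
      exact_mod_cast succ_mul_catalan_eq_centralBinom m
    have h₃ : ((m + 1) * centralBinom (m + 1) : ℤ) = 2 * (2 * m + 1) * centralBinom m := by
      exact_mod_cast succ_mul_centralBinom_succ m
    refine mul_left_cancel₀ (by positivity : ((m : ℤ) + 1) ≠ 0) ?_
    linear_combination (m + 1 : ℤ) * h₁ + h₃ - 2 * (2 * m + 1) * h₂
  refine mul_left_cancel₀ (by positivity : ((m : ℤ) + 2) ≠ 0) ?_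
  linear_combination ((j + m + 2 + j * (2 * m + 3)) * centralBinom j : ℤ) * hc
    - ((m + 2) * (2 * m + 1) * catalan m : ℤ) * hb

theorem sum_centralBinom_mul_catalan (n : ℕ) :
    ∑ j ∈ range (n + 1), centralBinom j * catalan (n - j) = (2 * n + 1).choose n := by
  set G : ℕ → ℤ := fun j => j * (2 * (n - j) + 1) * centralBinom j * catalan (n - j) with hG
  have step : ∀ j ∈ range n,
      ((n + 1) * (centralBinom j * catalan (n - j)) : ℤ) = G (j + 1) - G j := by
    intro j hj
    obtain ⟨m, rfl⟩ : ∃ m, n = j + m + 1 := ⟨n - j - 1, by grind⟩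
    have h₁ : j + m + 1 - j = m + 1 := by omega
    have h₂ : j + m + 1 - (j + 1) = m := by omega
    simp only [hG, h₁, h₂]
    push_cast
    linear_combination centralBinom_mul_catalan_telescope j m
  have key : ((n + 1) * ∑ j ∈ range (n + 1), centralBinom j * catalan (n - j) : ℤ) =
      (n + 1) * (2 * n + 1).choose n := by
    push_cast
    rw [mul_sum, sum_range_succ, sum_congr rfl step, sum_range_sub]
    simp only [hG, Nat.sub_self, catalan_zero]
    push_cast
    linear_combination (-1 : ℤ) * (by exact_mod_cast succ_mul_choose_two_mul_add_one n :
      ((n + 1) * (2 * n + 1).choose n : ℤ) = (2 * n + 1) * centralBinom n)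
  exact_mod_cast mul_left_cancel₀ (by positivity) key

end Nat

theorem integral_sin_pow_even_neg_pi_div_two (k : ℕ) :
    ∫ x in -(π / 2)..π / 2, sin x ^ (2 * k) = π * k.centralBinom / 4 ^ k := by
  induction k with
  | zero => simp
  | succ k ih =>
    have hb : ((k + 1) * (k + 1).centralBinom : ℝ) = 2 * (2 * k + 1) * k.centralBinom := by
      exact_mod_cast Nat.succ_mul_centralBinom_succ k
    rw [mul_add_one, integral_sin_pow, ih, cos_neg, cos_pi_div_two, pow_succ (4 : ℝ)]
    push_cast
    field_simp
    linear_combination (-2 * π) * hb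

theorem integral_mul_sqrt_one_sub_sq {g : ℝ → ℝ} (hg : Continuous g) :
    ∫ x in (-1)..1, g x * √(1 - x ^ 2) =
      ∫ θ in -(π / 2)..π / 2, g (sin θ) * cos θ ^ 2 := by
  have hsubst := integral_comp_mul_deriv (a := -(π / 2)) (b := π / 2)
    (fun x _ => hasDerivAt_sin x) continuousOn_cos (g := fun x => g x * √(1 - x ^ 2))
    (by fun_prop)
  rw [sin_neg, sin_pi_div_two] at hsubst
  rw [← hsubst]
  refine integral_congr fun θ hθ => ?_
  rw [Set.uIcc_of_le (by linarith [pi_pos])] at hθ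
  simp only [Function.comp, ← cos_sq', sqrt_sq (cos_nonneg_of_mem_Icc hθ)]
  ring

theorem integral_two_mul_pow_mul_sqrt_one_sub_sq (k : ℕ) :
    ∫ x in (-1)..1, (2 * x) ^ (2 * k) * √(1 - x ^ 2) = π / 2 * catalan k := by
  rw [integral_mul_sqrt_one_sub_sq (by fun_prop)]
  have h : ∀ θ, (2 * sin θ) ^ (2 * k) * cos θ ^ 2 =
      4 ^ k * (sin θ ^ (2 * k) - sin θ ^ (2 * (k + 1))) := by
    intro θ
    rw [cos_sq', mul_pow, pow_mul, pow_mul, pow_mul]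
    ring
  have hint : ∀ m : ℕ, IntervalIntegrable (fun θ => sin θ ^ m) MeasureTheory.volume
      (-(π / 2)) (π / 2) :=
    fun m => (continuous_sin.pow m).intervalIntegrable _ _
  simp only [h]
  rw [integral_const_mul, integral_sub (hint _) (hint _), integral_sin_pow_even_neg_pi_div_two,
    integral_sin_pow_even_neg_pi_div_two]
  have hb : ((k + 1) * (k + 1).centralBinom : ℝ) = 2 * (2 * k + 1) * k.centralBinom := by
    exact_mod_cast Nat.succ_mul_centralBinom_succ k
  have hc : ((k + 1) * catalan k : ℝ) = k.centralBinom := by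
    exact_mod_cast succ_mul_catalan_eq_centralBinom k
  rw [pow_succ (4 : ℝ)]
  field_simp
  refine mul_left_cancel₀ (by positivity : (k + 1 : ℝ) ≠ 0) ?_
  linear_combination (-2) * hb - 4 * hc

/-- The density `ψ_0` of the paper for `ν = n + 1`, with the `j = 0` term (`centralBinom 0 = 1`)
folded into the sum and `2 binom(2j-1, j-1) = centralBinom j`. -/
noncomputable def equilibriumDensity (n : ℕ) (η : ℝ) : ℝ :=
  2 / π * ((∑ j ∈ range (n + 1), (j.centralBinom : ℝ) * (2 * η) ^ (2 * (n - j))) /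
    (2 * n + 1).choose n) * √(1 - η ^ 2)

theorem equilibriumDensity_zero (η : ℝ) :
    equilibriumDensity 0 η = 2 / π * √(1 - η ^ 2) := by
  simp [equilibriumDensity]

theorem equilibriumDensity_nonneg (n : ℕ) (η : ℝ) : 0 ≤ equilibriumDensity n η := by
  unfold equilibriumDensity
  have : 0 ≤ ∑ j ∈ range (n + 1), (j.centralBinom : ℝ) * (2 * η) ^ (2 * (n - j)) :=
    sum_nonneg fun j _ => mul_nonneg (Nat.cast_nonneg _) ((even_two_mul _).pow_nonneg _)
  positivity

theorem continuous_equilibriumDensity (n : ℕ) : Continuous (equilibriumDensity n) := by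
  unfold equilibriumDensity
  fun_prop

theorem integral_equilibriumDensity (n : ℕ) : ∫ η in (-1)..1, equilibriumDensity n η = 1 := by
  have hC : (0 : ℝ) < (2 * n + 1).choose n := by exact_mod_cast Nat.choose_pos (by omega)
  have h : ∀ η, equilibriumDensity n η = ∑ j ∈ range (n + 1),
      2 / π / (2 * n + 1).choose n * j.centralBinom *
        ((2 * η) ^ (2 * (n - j)) * √(1 - η ^ 2)) := by
    intro η
    simp only [equilibriumDensity, sum_div, sum_mul, mul_sum]
    refine sum_congr rfl fun j _ => ?_
    ring
  simp only [h]
  rw [integral_finsetSum fun j _ => by apply Continuous.intervalIntegrable; fun_prop]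
  simp only [integral_const_mul, integral_two_mul_pow_mul_sqrt_one_sub_sq]
  have key : (∑ j ∈ range (n + 1), (j.centralBinom * catalan (n - j) : ℝ)) =
      (2 * n + 1).choose n := by
    exact_mod_cast Nat.sum_centralBinom_mul_catalan n
  rw [← div_self hC.ne', ← key, sum_div]
  refine sum_congr rfl fun j _ => ?_
  field_simp

theorem equilibriumDensity_sub_one_eq {ν : ℕ} (hν : 1 ≤ ν) (η : ℝ) :
    equilibriumDensity (ν - 1) η = 2 / π *
      ((2 * η) ^ (2 * ν - 2) / (Nat.choose (2 * ν - 1) (ν - 1) : ℝ)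
          + ∑ j ∈ Finset.Icc 1 (ν - 1),
              (2 * (Nat.choose (2 * j - 1) (j - 1) : ℝ) /
                  (Nat.choose (2 * ν - 1) (ν - 1) : ℝ)) *
                (2 * η) ^ (2 * ν - 2 - 2 * j)) * √(1 - η ^ 2) := by
  obtain ⟨n, rfl⟩ : ∃ n, ν = n + 1 := ⟨ν - 1, by omega⟩
  have hsub : 2 * (n + 1) - 1 = 2 * n + 1 := by omega
  simp only [equilibriumDensity, Nat.add_sub_cancel, hsub, Nat.range_succ_eq_Icc_zero,
    ← insert_Icc_add_one_left_eq_Icc n.zero_le]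
  rw [sum_insert (by simp), zero_add, add_div, sum_div]
  congr 3
  · simp [show 2 * (n + 1) - 2 = 2 * n by omega]
  · refine sum_congr rfl fun j hj => ?_
    obtain ⟨i, rfl⟩ : ∃ i, j = i + 1 := ⟨j - 1, by grind⟩
    have hcb : (2 * (2 * (i + 1) - 1).choose (i + 1 - 1) : ℝ) = (i + 1).centralBinom := by
      rw [show 2 * (i + 1) - 1 = 2 * i + 1 by omega, Nat.add_sub_cancel]
      exact_mod_cast Nat.two_mul_choose_two_mul_add_one i
    rw [hcb, show 2 * (n + 1) - 2 - 2 * (i + 1) = 2 * (n - (i + 1)) by omega]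
    ring

/-- Let `ν ≥ 1` and `z ∈ [0,1]`.  The rescaled equilibrium
density
`ψ_z(η) = (2/π)·[z + (1−z)·((2η)^{2ν−2}/binom(2ν−1,ν−1) + Σ_{j=1}^{ν−1} (2·binom(2j−1,j−1)/binom(2ν−1,ν−1))·(2η)^{2ν−2−2j})]·√(1−η²)`
is nonnegative on `[−1,1]` and integrates to `1` over `[−1,1]`: it is the density
of a probability measure on `[−1,1]` (a convex combination of the semicircle
density at `z = 1` and the monomial-weight equilibrium density at `z = 0`). -/
theorem equilibrium_density_probability
    (ν : ℕ) (hν : 1 ≤ ν) (z : ℝ) (hz : z ∈ Set.Icc (0 : ℝ) 1)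
    (ψ : ℝ → ℝ)
    (hψ : ∀ η : ℝ, ψ η = (2 / Real.pi) *
      (z + (1 - z) *
        ((2 * η) ^ (2 * ν - 2) / (Nat.choose (2 * ν - 1) (ν - 1) : ℝ)
          + ∑ j ∈ Finset.Icc 1 (ν - 1),
              (2 * (Nat.choose (2 * j - 1) (j - 1) : ℝ) /
                  (Nat.choose (2 * ν - 1) (ν - 1) : ℝ)) *
                (2 * η) ^ (2 * ν - 2 - 2 * j))) *
      Real.sqrt (1 - η ^ 2)) :
    (∀ η ∈ Set.Icc (-1 : ℝ) 1, 0 ≤ ψ η) ∧ (∫ η in (-1 : ℝ)..1, ψ η) = 1 := by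
  obtain ⟨hz₀, hz₁⟩ := hz
  have hψ_mix : ∀ η,
      ψ η = z * equilibriumDensity 0 η + (1 - z) * equilibriumDensity (ν - 1) η := by
    intro η
    rw [hψ, equilibriumDensity_zero, equilibriumDensity_sub_one_eq hν]
    ring
  have hint : ∀ (c : ℝ) (n : ℕ), IntervalIntegrable (fun η => c * equilibriumDensity n η)
      MeasureTheory.volume (-1) 1 :=
    fun c n => ((continuous_equilibriumDensity n).const_mul c).intervalIntegrable _ _
  refine ⟨fun η _ => ?_, ?_⟩
  · rw [hψ_mix]
    exact add_nonneg (mul_nonneg hz₀ (equilibriumDensity_nonneg 0 η))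
      (mul_nonneg (sub_nonneg.2 hz₁) (equilibriumDensity_nonneg _ η))
  · simp only [hψ_mix]
    rw [integral_add (hint _ _) (hint _ _), integral_const_mul, integral_const_mul,
      integral_equilibriumDensity, integral_equilibriumDensity]
    ring
end
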